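/- arXiv:1709.07712 — 7 statements merged into one kernel-verified Lean document; each statement's English description precedes it below -/
import Mathlib

section
/- Let G be a prime (house, co-dart)-free graph that contains an induced odd cycle (hole) of length at least 7. Then G is triangle-free. -/
open SimpleGraph

/-- A homogeneous set: every vertex outside is complete or anticomplete to it. -/
def IsHomogeneousSet {V : Type*} (G : SimpleGraph V) (S : Set V) : Prop :=
  ∀ v ∉ S, (∀ s ∈ S, G.Adj v s) ∨ (∀ s ∈ S, ¬ G.Adj v s)

/-- A graph is prime if its only homogeneous sets are trivial. -/
def IsPrime {V : Type*} (G : SimpleGraph V) : Prop :=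
  ∀ S : Set V, IsHomogeneousSet G S → S = ∅ ∨ (∃ v, S = {v}) ∨ S = Set.univ

/-- `Free G H` : `G` contains no induced subgraph isomorphic to `H`. -/
def Free {V W : Type*} (G : SimpleGraph V) (H : SimpleGraph W) : Prop :=
  ¬ Nonempty (H ↪g G)

/-- The house: complement of the path on 5 vertices. -/
def house : SimpleGraph (Fin 5) := (pathGraph 5)ᶜ

/-- The dart: a diamond on 0,1,2,3 (missing edge 2-3) plus a pendant vertex 4
adjacent to the degree-3 vertex 0. -/
def dart : SimpleGraph (Fin 5) :=
  SimpleGraph.fromRel (fun a b =>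
    (a, b) ∈ [((0 : Fin 5), (1 : Fin 5)), (0, 2), (0, 3), (1, 2), (1, 3), (0, 4)])

/-- The co-dart: complement of the dart. -/
def codart : SimpleGraph (Fin 5) := dartᶜ

/-- The bull: triangle 0,1,2 with pendant vertices 3 (at 0) and 4 (at 1). -/
def bull : SimpleGraph (Fin 5) :=
  SimpleGraph.fromRel (fun a b =>
    (a, b) ∈ [((0 : Fin 5), (1 : Fin 5)), (1, 2), (0, 2), (0, 3), (1, 4)])

/-- The fork (chair): path 0-1-2-3 plus a vertex 4 adjacent to 1. -/
def fork : SimpleGraph (Fin 5) :=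
  SimpleGraph.fromRel (fun a b =>
    (a, b) ∈ [((0 : Fin 5), (1 : Fin 5)), (1, 2), (2, 3), (1, 4)])

/-- The hammer: triangle 0,1,2 with a path 2-3-4 attached. -/
def hammer : SimpleGraph (Fin 5) :=
  SimpleGraph.fromRel (fun a b =>
    (a, b) ∈ [((0 : Fin 5), (1 : Fin 5)), (1, 2), (0, 2), (2, 3), (3, 4)])

/-- A graph is perfect if every induced subgraph has chromatic number equal to
its clique number. -/
def IsPerfect {V : Type*} (G : SimpleGraph V) : Prop :=
  ∀ S : Set V, (G.induce S).chromaticNumber = ((G.induce S).cliqueNum : ℕ∞)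

/-- A realization of an induced cycle of length `ℓ` by nonempty pairwise disjoint sets
`A i`, with `A i` complete to `A (i+1)` and no other edges between distinct sets. -/
def CycleBlowup {V : Type*} (G : SimpleGraph V) {ℓ : ℕ} (A : ZMod ℓ → Set V) : Prop :=
  (∀ i, (A i).Nonempty) ∧
  (∀ i j, i ≠ j → Disjoint (A i) (A j)) ∧
  (∀ i, ∀ x ∈ A i, ∀ y ∈ A (i + 1), G.Adj x y) ∧
  (∀ i j, i ≠ j → j ≠ i + 1 → i ≠ j + 1 → ∀ x ∈ A i, ∀ y ∈ A j, ¬ G.Adj x y)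

/-!
A vertex adjacent to two consecutive vertices of the odd hole `C` is adjacent to the next one
(else a house or a co-dart appears), hence to all of `C`. Such vertices cannot exist: a vertex
not complete to `C` has no two consecutive neighbours on `C`, so, `C` being odd, it has two
consecutive non-neighbours, and a co-dart shows that it is adjacent to every vertex complete to
`C`; primality then rules out the complete vertices. So no triangle contains an edge of `C`, and
further house and co-dart arguments show that no triangle has a vertex on `C` or a neighbour on
`C`, and that no vertex is adjacent to exactly one vertex of a triangle. The vertices lying in
triangles therefore form a homogeneous set avoiding `C`, which primality forces to be empty.
-/

section

variable {V : Type*} {G : SimpleGraph V}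

def SimpleGraph.Embedding.ofAdjIff {W : Type*} {H : SimpleGraph W} (f : W → V)
    (htwin : ∀ i j, (∀ k, H.Adj k i ↔ H.Adj k j) → i = j)
    (hf : ∀ i j, G.Adj (f i) (f j) ↔ H.Adj i j) : H ↪g G where
  toFun := f
  inj' i j hij := htwin i j fun k => by rw [← hf, ← hf, hij]
  map_rel_iff' := hf _ _

theorem nonempty_house_embedding {a b c d e : V} (hab : ¬G.Adj a b) (hbc : ¬G.Adj b c)
    (hcd : ¬G.Adj c d) (hde : ¬G.Adj d e) (hac : G.Adj a c) (had : G.Adj a d) (hae : G.Adj a e)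
    (hbd : G.Adj b d) (hbe : G.Adj b e) (hce : G.Adj c e) : Nonempty (house ↪g G) := by
  refine ⟨.ofAdjIff ![a, b, c, d, e] ?_ ?_⟩
  · simp only [house, compl_adj, pathGraph_adj]
    decide
  · intro i j
    fin_cases i <;> fin_cases j <;> simp_all [house, pathGraph_adj, G.adj_comm]

theorem nonempty_codart_embedding {a b c p z : V} (hab : G.Adj a b) (hac : G.Adj a c)
    (hbc : G.Adj b c) (hpc : G.Adj p c) (hpa : ¬G.Adj p a) (hpb : ¬G.Adj p b) (hza : ¬G.Adj z a)
    (hzb : ¬G.Adj z b) (hzc : ¬G.Adj z c) (hzp : ¬G.Adj z p) : Nonempty (codart ↪g G) := by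
  refine ⟨.ofAdjIff ![z, p, a, b, c] ?_ ?_⟩
  · simp only [codart, dart, compl_adj, fromRel_adj]
    intro i j
    fin_cases i <;> fin_cases j <;> decide
  · intro i j
    fin_cases i <;> fin_cases j <;> simp_all [codart, dart, G.adj_comm]

theorem Function.Periodic.exists_iff_succ {p : ℕ → Prop} {n : ℕ} (hp : Function.Periodic p n)
    (hn : Odd n) : ∃ i, p i ↔ p (i + 1) := by
  by_contra! h
  have alt : ∀ i, p i ↔ (p 0 ↔ Even i) := by
    intro i
    induction i with
    | zero => simp
    | succ i ih =>
      have := h i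
      rw [Nat.even_add_one]
      tauto
  have key := alt n
  rw [show p n = p 0 by simpa using hp 0] at key
  have := Nat.not_even_iff_odd.mpr hn
  tauto

open Fin.NatCast in
theorem cycleGraph_adj_natCast {ℓ : ℕ} [NeZero ℓ] (hℓ : 2 ≤ ℓ) (a b : ℕ) :
    (cycleGraph ℓ).Adj (a : Fin ℓ) (b : Fin ℓ) ↔ a ≡ b + 1 [MOD ℓ] ∨ b ≡ a + 1 [MOD ℓ] := by
  obtain ⟨m, rfl⟩ := Nat.exists_eq_add_of_le' hℓ
  simp only [cycleGraph_adj, sub_eq_iff_eq_add, Fin.ext_iff, Fin.val_add, Fin.val_natCast,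
    Fin.val_one, Nat.mod_add_mod, add_comm 1, Nat.ModEq]

theorem adj_two_of_adj_zero_of_adj_one (hH : _root_.Free G house) (hC : _root_.Free G codart)
    (P : pathGraph 6 ↪g G) {v : V} (h0 : G.Adj v (P 0)) (h1 : G.Adj v (P 1)) : G.Adj v (P 2) := by
  by_contra h2
  have far : ∀ i : Fin 6, (i = 4 ∨ i = 5) → G.Adj v (P i) := by
    rintro i hi
    by_contra hi'
    refine hC (nonempty_codart_embedding (p := P 2) (z := P i) h0 h1 ?_ ?_ (fun h => h2 h.symm)
      ?_ (fun h => hi' h.symm) ?_ ?_ ?_)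
    all_goals rcases hi with rfl | rfl <;> simp [pathGraph_adj]
  by_cases h3 : G.Adj v (P 3)
  · refine hH (nonempty_house_embedding (a := P 3) (b := P 1) (c := P 4) (d := P 2) (e := v)
      ?_ ?_ ?_ (fun h => h2 h.symm) ?_ ?_ h3.symm ?_ h1.symm (far 4 (by simp)).symm) <;>
      simp [pathGraph_adj]
  · refine hC (nonempty_codart_embedding (a := P 4) (b := P 5) (c := v) (p := P 0) (z := P 2)
      ?_ (far 4 (by simp)).symm (far 5 (by simp)).symm h0.symm ?_ ?_ ?_ ?_ (fun h => h2 h.symm)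
      ?_) <;> simp [pathGraph_adj]

section Triangle

variable (hH : _root_.Free G house) (hC : _root_.Free G codart) (P : pathGraph 6 ↪g G)
  (hD : ∀ {v i j}, (pathGraph 6).Adj i j → G.Adj v (P i) → ¬G.Adj v (P j))
include hH hC hD

theorem not_adj_three_of_adj_one {x y : V} (hxy : G.Adj x y) (hx : G.Adj x (P 1))
    (hy : G.Adj y (P 1)) : ¬G.Adj x (P 3) := by
  intro hx3
  have hx2 : ¬G.Adj x (P 2) := hD (by simp [pathGraph_adj]) hx
  have hx4 : ¬G.Adj x (P 4) := hD (by simp [pathGraph_adj]) hx3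
  have hy2 : ¬G.Adj y (P 2) := hD (by simp [pathGraph_adj]) hy
  have hy4 : G.Adj y (P 4) := by
    by_contra hy4
    refine hC (nonempty_codart_embedding (p := P 2) (z := P 4) hxy hx hy ?_ (fun h => hx2 h.symm)
      (fun h => hy2 h.symm) (fun h => hx4 h.symm) (fun h => hy4 h.symm) ?_ ?_) <;>
      simp [pathGraph_adj]
  have hy3 : ¬G.Adj y (P 3) := hD (by simp [pathGraph_adj]) hy4
  refine hH (nonempty_house_embedding (a := x) (b := P 4) (c := P 1) (d := P 3) (e := y) hx4 ?_ ?_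
    (fun h => hy3 h.symm) hx hx3 hxy ?_ hy4.symm hy.symm) <;> simp [pathGraph_adj]

theorem not_adj_one_of_adj_one {x y : V} (hxy : G.Adj x y) (hx : G.Adj x (P 1)) :
    ¬G.Adj y (P 1) := by
  intro hy
  have hx0 : ¬G.Adj x (P 0) := hD (by simp [pathGraph_adj]) hx
  have hy0 : ¬G.Adj y (P 0) := hD (by simp [pathGraph_adj]) hy
  have h3 : G.Adj x (P 3) ∨ G.Adj y (P 3) := by
    by_contra! h
    refine hC (nonempty_codart_embedding (p := P 0) (z := P 3) hxy hx hy ?_ (fun h => hx0 h.symm)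
      (fun h => hy0 h.symm) (fun h' => h.1 h'.symm) (fun h' => h.2 h'.symm) ?_ ?_) <;>
      simp [pathGraph_adj]
  rcases h3 with h3 | h3
  · exact not_adj_three_of_adj_one hH hC P hD hxy hx hy h3
  · exact not_adj_three_of_adj_one hH hC P hD hxy.symm hy hx h3

end Triangle

theorem IsPrime.eq_univ_of_isHomogeneousSet (hP : IsPrime G) {S : Set V}
    (hS : IsHomogeneousSet G S) {x y : V} (hx : x ∈ S) (hy : y ∈ S) (hxy : x ≠ y) :
    S = Set.univ := by
  rcases hP S hS with rfl | ⟨v, rfl⟩ | h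
  · exact absurd hx (Set.notMem_empty x)
  · exact absurd (hx.trans hy.symm) hxy
  · exact h

theorem IsPrime.cliqueFree_three (hP : IsPrime G) {v₀ : V}
    (hv₀ : ∀ y z, G.Adj v₀ y → G.Adj v₀ z → ¬G.Adj y z)
    (h : ∀ {x y z w}, G.Adj x y → G.Adj x z → G.Adj y z → G.Adj w x → G.Adj w y ∨ G.Adj w z) :
    G.CliqueFree 3 := by
  classical
  set S := {v | ∃ y z, G.Adj v y ∧ G.Adj v z ∧ G.Adj y z}
  have hS : IsHomogeneousSet G S := by
    intro w hw
    right
    rintro s ⟨y, z, hsy, hsz, hyz⟩ hws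
    rcases h hsy hsz hyz hws with hwy | hwz
    · exact hw ⟨s, y, hws, hwy, hsy⟩
    · exact hw ⟨s, z, hws, hwz, hsz⟩
  intro t ht
  obtain ⟨x, y, z, hxy, hxz, hyz, -⟩ := is3Clique_iff.mp ht
  have hSuniv := hP.eq_univ_of_isHomogeneousSet hS ⟨y, z, hxy, hxz, hyz⟩
    ⟨x, z, hxy.symm, hyz, hxz⟩ hxy.ne
  obtain ⟨y', z', hy', hz', hyz'⟩ : v₀ ∈ S := hSuniv ▸ Set.mem_univ v₀
  exact hv₀ y' z' hy' hz' hyz'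

/-- An odd hole of length at least `7`, traversed periodically: any six consecutive terms of `c`
induce a path. -/
structure LongOddHole (G : SimpleGraph V) where
  c : ℕ → V
  len : ℕ
  odd_len : Odd len
  periodic : Function.Periodic c len
  adj_iff (k : ℕ) (i j : Fin 6) : G.Adj (c (k + i)) (c (k + j)) ↔ (pathGraph 6).Adj i j

namespace LongOddHole

open Fin.NatCast in
def ofCycleGraphEmbedding {ℓ : ℕ} (e : cycleGraph ℓ ↪g G) (hℓ : 7 ≤ ℓ) (hodd : Odd ℓ) :
    LongOddHole G :=
  haveI : NeZero ℓ := ⟨by omega⟩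
  { c := fun n => e n
    len := ℓ
    odd_len := hodd
    periodic := fun n => by simp
    adj_iff := fun k i j => by
      have cancel : ∀ a b : ℕ, a < ℓ → b < ℓ → (k + a ≡ k + b [MOD ℓ] ↔ a = b) :=
        fun a b ha hb => ⟨fun h => (Nat.ModEq.add_left_cancel' k h).eq_of_lt_of_lt ha hb,
          fun h => h ▸ rfl⟩
      rw [e.map_adj_iff, cycleGraph_adj_natCast (by omega), pathGraph_adj, add_assoc k,
        add_assoc k, cancel _ _ (by omega) (by omega), cancel _ _ (by omega) (by omega)]
      omega }

variable (C : LongOddHole G)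

def window (k : ℕ) : pathGraph 6 ↪g G :=
  .ofAdjIff (fun i => C.c (k + i)) (by simp only [pathGraph_adj]; decide) (C.adj_iff k)

@[simp]
theorem window_apply (k : ℕ) (i : Fin 6) : C.window k i = C.c (k + i) := rfl

theorem adj_succ (n : ℕ) : G.Adj (C.c n) (C.c (n + 1)) := by
  simpa [pathGraph_adj] using (C.adj_iff n 0 1).mpr (by simp [pathGraph_adj])

variable (hH : _root_.Free G house) (hC : _root_.Free G codart) (hP : IsPrime G)
include hH hC

theorem adj_of_adj_of_adj_succ {v : V} {a : ℕ} (h0 : G.Adj v (C.c a))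
    (h1 : G.Adj v (C.c (a + 1))) (n : ℕ) : G.Adj v (C.c n) := by
  have around : ∀ d, G.Adj v (C.c (a + d)) ∧ G.Adj v (C.c (a + d + 1)) := by
    intro d
    induction d with
    | zero => exact ⟨h0, h1⟩
    | succ d ih =>
      exact ⟨ih.2, adj_two_of_adj_zero_of_adj_one hH hC (C.window (a + d)) ih.1 ih.2⟩
  obtain ⟨d, hd⟩ : ∃ d, n + a * C.len = a + d :=
    Nat.exists_eq_add_of_le (le_add_left (Nat.le_mul_of_pos_right a C.odd_len.pos))
  have hper : C.c (n + a * C.len) = C.c n := by simpa using C.periodic.nat_mul a n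
  rw [← hper, hd]
  exact (around d).1

theorem isHomogeneousSet_compl_setOf_forall_adj :
    IsHomogeneousSet G {w | ∀ n, G.Adj w (C.c n)}ᶜ := by
  intro u hu
  left
  intro w hw
  have hu : ∀ n, G.Adj u (C.c n) := not_not.mp hu
  have hcons : ∀ i, G.Adj w (C.c i) → ¬G.Adj w (C.c (i + 1)) :=
    fun i h0 h1 => hw (C.adj_of_adj_of_adj_succ hH hC h0 h1)
  obtain ⟨i, hi⟩ := Function.Periodic.exists_iff_succ (p := fun n => G.Adj w (C.c n))
    (fun n => by simp only [C.periodic n]) C.odd_len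
  have hi0 : ¬G.Adj w (C.c i) := fun h => hcons i h (hi.mp h)
  have hi1 : ¬G.Adj w (C.c (i + 1)) := fun h => hi0 (hi.mpr h)
  set P := C.window i
  obtain ⟨m, hm, hwm⟩ : ∃ m : Fin 6, (m = 3 ∨ m = 4) ∧ ¬G.Adj w (P m) := by
    by_cases h3 : G.Adj w (P 3)
    · exact ⟨4, by simp, hcons _ h3⟩
    · exact ⟨3, by simp, h3⟩
  by_contra huw
  refine hC (nonempty_codart_embedding (a := P 0) (b := P 1) (c := u) (p := P m) (z := w) ?_
    (hu _).symm (hu _).symm (hu _).symm ?_ ?_ hi0 hi1 (fun h => huw h.symm) hwm) <;>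
    rcases hm with rfl | rfl <;> simp [pathGraph_adj]

include hP

theorem exists_not_adj (v : V) : ∃ n, ¬G.Adj v (C.c n) := by
  have hX := hP.eq_univ_of_isHomogeneousSet (C.isHomogeneousSet_compl_setOf_forall_adj hH hC)
    (fun h => G.irrefl (h 0)) (fun h => G.irrefl (h 1)) (C.adj_succ 0).ne
  exact not_forall.mp (hX ▸ Set.mem_univ v : v ∈ {w | ∀ n, G.Adj w (C.c n)}ᶜ)

theorem not_adj_succ_of_adj ⦃v : V⦄ ⦃n : ℕ⦄ (h : G.Adj v (C.c n)) : ¬G.Adj v (C.c (n + 1)) :=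
  fun h' =>
    have ⟨m, hm⟩ := C.exists_not_adj hH hC hP v
    hm (C.adj_of_adj_of_adj_succ hH hC h h' m)

theorem not_adj_window_of_adj {v : V} {k : ℕ} {i j : Fin 6} (hij : (pathGraph 6).Adj i j)
    (hi : G.Adj v (C.window k i)) : ¬G.Adj v (C.window k j) := by
  simp only [window_apply] at hi ⊢
  rcases pathGraph_adj.mp hij with h | h
  · rw [← h, ← add_assoc]
    exact C.not_adj_succ_of_adj hH hC hP hi
  · rw [← h, ← add_assoc] at hi
    exact fun hj => C.not_adj_succ_of_adj hH hC hP hj hi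

theorem not_adj_of_adj_of_adj ⦃x y : V⦄ (hxy : G.Adj x y) ⦃n : ℕ⦄ (hx : G.Adj x (C.c n)) :
    ¬G.Adj y (C.c n) := by
  obtain ⟨b, hb⟩ : ∃ b, C.window b 1 = C.c n := by
    refine ⟨n + C.len - 1, ?_⟩
    have := C.odd_len.pos
    rw [window_apply, Fin.val_one, Nat.sub_add_cancel (by omega), C.periodic]
  rw [← hb] at hx ⊢
  exact not_adj_one_of_adj_one hH hC _ (C.not_adj_window_of_adj hH hC hP) hxy hx

theorem not_adj_succ_of_triangle ⦃a b t : V⦄ (hab : G.Adj a b) (hat : G.Adj a t)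
    (hbt : G.Adj b t) ⦃n : ℕ⦄ (ha : G.Adj a (C.c n)) : ¬G.Adj b (C.c (n + 1)) := by
  intro hb
  have hE := C.not_adj_of_adj_of_adj hH hC hP
  exact hH (nonempty_house_embedding (a := a) (b := C.c (n + 1)) (c := t) (d := C.c n) (e := b)
    (C.not_adj_succ_of_adj hH hC hP ha) (fun h => hE hbt hb h.symm) (hE hat ha)
    (fun h => hE hab ha h.symm) hat ha hab (C.adj_succ n).symm hb.symm hbt.symm)

theorem not_adj_of_triangle ⦃x y z : V⦄ (hxy : G.Adj x y) (hxz : G.Adj x z) (hyz : G.Adj y z)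
    (n : ℕ) : ¬G.Adj x (C.c n) := by
  intro hx
  have hE := C.not_adj_of_adj_of_adj hH hC hP
  have hD := C.not_adj_succ_of_adj hH hC hP
  have hT := C.not_adj_succ_of_triangle hH hC hP
  set P := C.window n
  have cover : ∀ i : Fin 6, (i = 2 ∨ i = 3) → G.Adj x (P i) ∨ G.Adj y (P i) ∨ G.Adj z (P i) := by
    intro i hi
    by_contra! h
    refine hC (nonempty_codart_embedding (a := y) (b := z) (c := x) (p := P 0) (z := P i) hyz
      hxy.symm hxz.symm hx.symm (fun h => hE hxy hx h.symm) (fun h => hE hxz hx h.symm)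
      (fun h' => h.2.1 h'.symm) (fun h' => h.2.2 h'.symm) (fun h' => h.1 h'.symm) ?_)
    rcases hi with rfl | rfl <;> simp [pathGraph_adj]
  rcases cover 2 (by simp) with h2 | h2 | h2 <;> rcases cover 3 (by simp) with h3 | h3 | h3
  · exact hD h2 h3
  · exact hT hxy hxz hyz h2 h3
  · exact hT hxz hxy hyz.symm h2 h3
  · exact hT hxy.symm hyz hxz h2 h3
  · exact hD h2 h3
  · exact hT hyz hxy.symm hxz.symm h2 h3
  · exact hT hxz.symm hyz.symm hxy h2 h3
  · exact hT hyz.symm hxz.symm hxy.symm h2 h3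
  · exact hD h2 h3

include C in
theorem adj_or_adj_of_triangle {x y z w : V} (hxy : G.Adj x y) (hxz : G.Adj x z)
    (hyz : G.Adj y z) (hw : G.Adj w x) : G.Adj w y ∨ G.Adj w z := by
  by_contra! h
  obtain ⟨n, hn⟩ := C.exists_not_adj hH hC hP w
  have hT := C.not_adj_of_triangle hH hC hP
  exact hC (nonempty_codart_embedding (a := y) (b := z) (c := x) (p := w) (z := C.c n) hyz
    hxy.symm hxz.symm hw h.1 h.2 (fun h => hT hxy.symm hyz hxz n h.symm)
    (fun h => hT hxz.symm hyz.symm hxy n h.symm) (fun h => hT hxy hxz hyz n h.symm)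
    (fun h => hn h.symm))

end LongOddHole

end

theorem stmt0_general {V : Type*} (G : SimpleGraph V)
    (hprime : IsPrime G) (hhouse : _root_.Free G house) (hcodart : _root_.Free G codart)
    (ℓ : ℕ) (hℓ : 7 ≤ ℓ) (hodd : Odd ℓ)
    (hhole : Nonempty (cycleGraph ℓ ↪g G)) :
    G.CliqueFree 3 := by
  obtain ⟨e⟩ := hhole
  let C := LongOddHole.ofCycleGraphEmbedding e hℓ hodd
  exact hprime.cliqueFree_three (v₀ := C.c 0)
    (fun _ _ hy hz hyz => C.not_adj_of_adj_of_adj hhouse hcodart hprime hyz hy.symm hz.symm)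
    (C.adj_or_adj_of_triangle hhouse hcodart hprime)

/-- A prime (house, co-dart)-free graph containing an induced odd cycle of length
at least 7 is triangle-free. -/
theorem stmt0 {V : Type*} [Fintype V] (G : SimpleGraph V)
    (hprime : IsPrime G) (hhouse : _root_.Free G house) (hcodart : _root_.Free G codart)
    (ℓ : ℕ) (hℓ : 7 ≤ ℓ) (hodd : Odd ℓ)
    (hhole : Nonempty (cycleGraph ℓ ↪g G)) :
    G.CliqueFree 3 :=
  stmt0_general G hprime hhouse hcodart ℓ hℓ hodd hhole
end

section
/- Let G be a prime (house, co-dart)-free graph containing an induced odd cycle C of length ℓ ≥ 7, realized by nonempty pairwise disjoint vertex sets A_1,...,A_ℓ where A_i is complete to A_{i+1} (indices mod ℓ) with no other edges between distinct sets, chosen so that A = A_1 ∪ ... ∪ A_ℓ is inclusionwise maximal. Then each A_i is a stable (independent) set. -/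
open SimpleGraph

/-!
If two vertices `x, y` of `A i` were adjacent, pick `b ∈ A (i+1)`, `c ∈ A (i+2)` and
`d ∈ A (i+4)`. Then `x, y, b` is a triangle, `c` is a pendant vertex at `b`, and, since `ℓ ≥ 7`,
`d` is anticomplete to `A i ∪ A (i+1) ∪ A (i+2)`: these five vertices induce a co-dart.
-/

theorem ZMod.add_natCast_ne_add_natCast {ℓ : ℕ} (i : ZMod ℓ) {a b : ℕ} (hab : a < b)
    (hb : b < a + ℓ) : i + (a : ZMod ℓ) ≠ i + b := by
  rw [Ne, add_right_inj, ZMod.natCast_eq_natCast_iff, Nat.modEq_iff_dvd' hab.le]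
  exact fun h => (Nat.sub_pos_of_lt hab).ne' (Nat.eq_zero_of_dvd_of_lt h (by omega))

namespace CycleBlowup

variable {V : Type*} {G : SimpleGraph V} {ℓ : ℕ} {A : ZMod ℓ → Set V}

theorem adj (hA : CycleBlowup G A) (i : ZMod ℓ) {a b : ℕ} (hab : b = a + 1) {x y : V}
    (hx : x ∈ A (i + a)) (hy : y ∈ A (i + b)) : G.Adj x y := by
  refine hA.2.2.1 (i + a) x hx y ?_
  rwa [add_assoc, ← Nat.cast_add_one, ← hab]

theorem not_adj (hA : CycleBlowup G A) (i : ZMod ℓ) {a b : ℕ} (hab : a + 2 ≤ b)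
    (hb : b + 2 ≤ a + ℓ) {x y : V} (hx : x ∈ A (i + a)) (hy : y ∈ A (i + b)) :
    ¬ G.Adj x y := by
  have add_one_eq : ∀ n : ℕ, i + n + 1 = i + (n + 1 : ℕ) := fun n => by push_cast; ring
  refine hA.2.2.2 _ _ ?_ ?_ ?_ x hx y hy
  · exact ZMod.add_natCast_ne_add_natCast i (by omega) (by omega)
  · rw [add_one_eq]; exact (ZMod.add_natCast_ne_add_natCast i (by omega) (by omega)).symm
  · rw [add_one_eq]; exact ZMod.add_natCast_ne_add_natCast i (by omega) (by omega)

end CycleBlowup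

/-- The co-dart is a triangle `x y b` with a pendant vertex `c` at `b`, plus an isolated
vertex `d`. -/
theorem SimpleGraph.not_free_codart {V : Type*} {G : SimpleGraph V} {x y b c d : V}
    (hxy : G.Adj x y) (hxb : G.Adj x b) (hyb : G.Adj y b) (hbc : G.Adj b c)
    (hxc : ¬ G.Adj x c) (hyc : ¬ G.Adj y c) (hxd : ¬ G.Adj x d) (hyd : ¬ G.Adj y d)
    (hbd : ¬ G.Adj b d) (hcd : ¬ G.Adj c d) : ¬ _root_.Free G codart := by
  have hxc' : x ≠ c := by rintro rfl; exact hyc hxy.symm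
  have hyc' : y ≠ c := by rintro rfl; exact hxc hxy
  have hxd' : x ≠ d := by rintro rfl; exact hyd hxy.symm
  have hyd' : y ≠ d := by rintro rfl; exact hxd hxy
  have hbd' : b ≠ d := by rintro rfl; exact hxd hxb
  have hcd' : c ≠ d := by rintro rfl; exact hbd hbc
  refine fun hfree => hfree ⟨⟨⟨![d, c, x, y, b], ?_⟩, ?_⟩⟩
  · intro u v huv
    fin_cases u <;> fin_cases v <;>
      simp_all [hxy.ne, hxb.ne, hyb.ne, hbc.ne, hxc'.symm, hyc'.symm, hxd'.symm, hyd'.symm,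
        hbd'.symm, hcd'.symm]
  · intro u v
    show G.Adj (![d, c, x, y, b] u) (![d, c, x, y, b] v) ↔ _
    have hcx := mt G.adj_symm hxc; have hcy := mt G.adj_symm hyc
    have hdx := mt G.adj_symm hxd; have hdy := mt G.adj_symm hyd
    have hdb := mt G.adj_symm hbd; have hdc := mt G.adj_symm hcd
    fin_cases u <;> fin_cases v <;>
      simp_all [codart, dart, hxy.symm, hxb.symm, hyb.symm, hbc.symm]

theorem stmt1_general {V : Type*} (G : SimpleGraph V)
    (hcodart : _root_.Free G codart)
    (ℓ : ℕ) (hℓ : 7 ≤ ℓ)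
    (A : ZMod ℓ → Set V) (hA : CycleBlowup G A) :
    ∀ i, (A i).Pairwise (fun x y => ¬ G.Adj x y) := by
  intro i x hx y hy _ hxy
  have hx₀ : x ∈ A (i + (0 : ℕ)) := by simpa using hx
  have hy₀ : y ∈ A (i + (0 : ℕ)) := by simpa using hy
  obtain ⟨b, hb⟩ := hA.1 (i + (1 : ℕ))
  obtain ⟨c, hc⟩ := hA.1 (i + (2 : ℕ))
  obtain ⟨d, hd⟩ := hA.1 (i + (4 : ℕ))
  exact SimpleGraph.not_free_codart hxy (hA.adj i rfl hx₀ hb) (hA.adj i rfl hy₀ hb)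
    (hA.adj i rfl hb hc) (hA.not_adj i le_rfl (by omega) hx₀ hc)
    (hA.not_adj i le_rfl (by omega) hy₀ hc) (hA.not_adj i (by omega) (by omega) hx₀ hd)
    (hA.not_adj i (by omega) (by omega) hy₀ hd) (hA.not_adj i (by omega) (by omega) hb hd)
    (hA.not_adj i le_rfl (by omega) hc hd) hcodart

/-- In a prime (house, co-dart)-free graph with a maximal blowup realization of an odd
cycle of length `ℓ ≥ 7`, each part `A i` is a stable set. -/
theorem stmt1 {V : Type*} [Fintype V] (G : SimpleGraph V)
    (hprime : IsPrime G) (hhouse : _root_.Free G house) (hcodart : _root_.Free G codart)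
    (ℓ : ℕ) (hℓ : 7 ≤ ℓ) (hodd : Odd ℓ)
    (A : ZMod ℓ → Set V) (hA : CycleBlowup G A)
    (hmax : ∀ A' : ZMod ℓ → Set V, CycleBlowup G A' →
      (⋃ i, A i) ⊆ (⋃ i, A' i) → (⋃ i, A i) = (⋃ i, A' i)) :
    ∀ i, (A i).Pairwise (fun x y => ¬ G.Adj x y) :=
  stmt1_general G hcodart ℓ hℓ A hA
end

section
/- Let G be a prime (house, bull)-free graph that contains an induced P5 or C5, realized by nonempty pairwise disjoint sets A_1,...,A_5 with A_i complete to A_{i+1} for i=1,...,4, A_i anticomplete to A_{i+2} (mod 5), and A_5 either complete or anticomplete to A_1, chosen with A = A_1∪...∪A_5 inclusionwise maximal. Then for any vertex v outside A that is not complete to A, and any i, v is anticomplete to at least one of A_i and A_{i+1} (indices mod 5 over the adjacent pairs). -/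
open SimpleGraph

/-- A realization of an induced `P5` or `C5` by nonempty pairwise disjoint sets
`A 0, ..., A 4`: consecutive sets complete, sets at distance two (mod 5) anticomplete,
and `A 4` either complete or anticomplete to `A 0`. -/
def PathOrCycleBlowup5 {V : Type*} (G : SimpleGraph V) (A : Fin 5 → Set V) : Prop :=
  (∀ i, (A i).Nonempty) ∧
  (∀ i j, i ≠ j → Disjoint (A i) (A j)) ∧
  (∀ i : Fin 5, i ≠ 4 → ∀ x ∈ A i, ∀ y ∈ A (i + 1), G.Adj x y) ∧
  (∀ i : Fin 5, ∀ x ∈ A i, ∀ y ∈ A (i + 2), ¬ G.Adj x y) ∧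
  ((∀ x ∈ A 4, ∀ y ∈ A 0, G.Adj x y) ∨ (∀ x ∈ A 4, ∀ y ∈ A 0, ¬ G.Adj x y))

/-! Write `A` as a blowup of `C₅` or of `P₅`. By maximality, a vertex `v` outside `A` cannot be
added to a part `A j`, i.e. it is never adjacent to exactly the parts next to `A j`. Suppose `v`
has neighbours in two consecutive parts. Picking single vertices from a few parts and using that
no five vertices induce a bull or a house, `v` is forced to be complete or anticomplete to one
part after another, until it is complete to `A` or sees exactly the parts next to some `A j`.
Rotations and reflections of `C₅` and the reversal of `P₅` reduce the cycle case to one pair of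
consecutive parts and the path case to two. -/

instance (n : ℕ) : DecidableRel (pathGraph n).Adj := fun _ _ => decidable_of_iff' _ pathGraph_adj

instance : DecidableRel bull.Adj := fun i j => decidable_of_iff' _ (fromRel_adj _ i j)

instance : DecidableRel house.Adj := fun i j => decidable_of_iff' _ (compl_adj (pathGraph 5) i j)

section InducedCopies

variable {V W : Type*} {G : SimpleGraph V} {H : SimpleGraph W}

/-- Injectivity of `f` is automatic, as `H` has no two vertices with the same neighbourhood. -/
theorem Free.elim_of_adj_iff (hfree : _root_.Free G H)
    (hH : ∀ i j, (∀ k, H.Adj i k ↔ H.Adj j k) → i = j) (f : W → V)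
    (hf : ∀ i j, G.Adj (f i) (f j) ↔ H.Adj i j) : False :=
  hfree ⟨⟨⟨f, fun i j hij => hH i j fun k => by rw [← hf, ← hf, hij]⟩, hf _ _⟩⟩

theorem Free.elim_bull (hbull : _root_.Free G bull) {a b c d e : V}
    (hab : G.Adj a b) (hbc : G.Adj b c) (hac : G.Adj a c) (had : G.Adj a d) (hbe : G.Adj b e)
    (hae : ¬ G.Adj a e) (hbd : ¬ G.Adj b d) (hcd : ¬ G.Adj c d) (hce : ¬ G.Adj c e)
    (hde : ¬ G.Adj d e) : False := by
  refine hbull.elim_of_adj_iff (by decide) ![a, b, c, d, e] fun i j => ?_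
  fin_cases i <;> fin_cases j <;>
    simp [bull, hab, hbc, hac, had, hbe, hab.symm, hbc.symm, hac.symm, had.symm, hbe.symm,
      hae, hbd, hcd, hce, hde, G.adj_comm e, G.adj_comm d]

theorem Free.elim_house (hhouse : _root_.Free G house) {a b c d e : V}
    (hab : ¬ G.Adj a b) (hbc : ¬ G.Adj b c) (hcd : ¬ G.Adj c d) (hde : ¬ G.Adj d e)
    (hac : G.Adj a c) (had : G.Adj a d) (hae : G.Adj a e) (hbd : G.Adj b d) (hbe : G.Adj b e)
    (hce : G.Adj c e) : False := by
  refine hhouse.elim_of_adj_iff (by decide) ![a, b, c, d, e] fun i j => ?_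
  fin_cases i <;> fin_cases j <;>
    simp [house, pathGraph_adj, hab, hbc, hcd, hde, hac, had, hae, hbd, hbe, hce, hac.symm,
      had.symm, hae.symm, hbd.symm, hbe.symm, hce.symm, G.adj_comm b a, G.adj_comm c b,
      G.adj_comm d c, G.adj_comm e d]

end InducedCopies

def cycleGraph.rotation (n : ℕ) (r : Fin (n + 2)) :
    cycleGraph (n + 2) ≃g cycleGraph (n + 2) where
  toEquiv := Equiv.addLeft r
  map_rel_iff' := by simp [cycleGraph_adj]

def cycleGraph.reflection (n : ℕ) (r : Fin (n + 2)) :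
    cycleGraph (n + 2) ≃g cycleGraph (n + 2) where
  toEquiv := Equiv.subLeft r
  map_rel_iff' := by simp [cycleGraph_adj, or_comm]

def pathGraph.reflection (n : ℕ) : pathGraph n ≃g pathGraph n where
  toEquiv := Fin.revPerm
  map_rel_iff' := by
    intro a b
    simp only [pathGraph_adj, Fin.revPerm_apply, Fin.val_rev]
    omega

theorem mem_update_insert_iff {V W : Type*} [DecidableEq W] {A : W → Set V} {i j : W} {v x : V} :
    x ∈ Function.update A j (insert v (A j)) i ↔ i = j ∧ x = v ∨ x ∈ A i := by
  rcases eq_or_ne i j with rfl | h <;> simp [*]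

section Blowup

variable {V W W' : Type*} {G : SimpleGraph V} {H : SimpleGraph W} {H' : SimpleGraph W'}
  {A : W → Set V} {v : V}

structure IsBlowup (G : SimpleGraph V) (H : SimpleGraph W) (A : W → Set V) : Prop where
  nonempty : ∀ i, (A i).Nonempty
  pairwise_disjoint : Pairwise fun i j => Disjoint (A i) (A j)
  adj_iff : ∀ ⦃i j⦄, i ≠ j → ∀ x ∈ A i, ∀ y ∈ A j, (G.Adj x y ↔ H.Adj i j)

namespace IsBlowup

theorem adj (hA : IsBlowup G H A) {i j : W} (hij : H.Adj i j) {x y : V} (hx : x ∈ A i)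
    (hy : y ∈ A j) : G.Adj x y :=
  (hA.adj_iff hij.ne x hx y hy).2 hij

theorem not_adj (hA : IsBlowup G H A) {i j : W} (hij : i ≠ j ∧ ¬ H.Adj i j) {x y : V}
    (hx : x ∈ A i) (hy : y ∈ A j) : ¬ G.Adj x y :=
  fun h => hij.2 ((hA.adj_iff hij.1 x hx y hy).1 h)

theorem comp_iso (hA : IsBlowup G H A) (φ : H' ≃g H) : IsBlowup G H' (A ∘ φ) where
  nonempty i := hA.nonempty (φ i)
  pairwise_disjoint _ _ hij := hA.pairwise_disjoint (φ.injective.ne hij)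
  adj_iff _ _ hij x hx y hy := (hA.adj_iff (φ.injective.ne hij) x hx y hy).trans φ.map_rel_iff

theorem update_insert [DecidableEq W] (hA : IsBlowup G H A) (hv : ∀ i, v ∉ A i) {j : W}
    (hj : ∀ k ≠ j, ∀ y ∈ A k, (G.Adj v y ↔ H.Adj j k)) :
    IsBlowup G H (Function.update A j (insert v (A j))) where
  nonempty i := (hA.nonempty i).mono fun _ hx => mem_update_insert_iff.2 (Or.inr hx)
  pairwise_disjoint i k hik := by
    refine Set.disjoint_left.2 fun x hxi hxk => ?_
    rw [mem_update_insert_iff] at hxi hxk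
    rcases hxi with ⟨rfl, rfl⟩ | hxi <;> rcases hxk with ⟨rfl, hxv⟩ | hxk
    · exact hik rfl
    · exact hv k hxk
    · exact hv i (hxv ▸ hxi)
    · exact Set.disjoint_left.1 (hA.pairwise_disjoint hik) hxi hxk
  adj_iff i k hik x hx y hy := by
    rw [mem_update_insert_iff] at hx hy
    rcases hx with ⟨rfl, rfl⟩ | hx <;> rcases hy with ⟨rfl, rfl⟩ | hy
    · exact absurd rfl hik
    · exact hj k hik.symm y hy
    · rw [G.adj_comm, H.adj_comm]; exact hj i hik x hx
    · exact hA.adj_iff hik x hx y hy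

end IsBlowup

/-- For no part `A j` does `v` see, outside `A j`, exactly what the vertices of `A j` see, so `v`
could not join any part of the blowup. -/
structure IsUnabsorbable (G : SimpleGraph V) (H : SimpleGraph W) (A : W → Set V) (v : V) :
    Prop where
  isBlowup : IsBlowup G H A
  not_insertable : ∀ j, ¬ ∀ k ≠ j, ∀ y ∈ A k, (G.Adj v y ↔ H.Adj j k)
  not_complete : ¬ ∀ i, ∀ y ∈ A i, G.Adj v y

theorem IsBlowup.isUnabsorbable [DecidableEq W] (hA : IsBlowup G H A)
    (hmax : ∀ A', IsBlowup G H A' → (⋃ i, A i) ⊆ (⋃ i, A' i) →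
      (⋃ i, A i) = ⋃ i, A' i)
    (hv : v ∉ ⋃ i, A i) (hnc : ¬ ∀ a ∈ ⋃ i, A i, G.Adj v a) :
    IsUnabsorbable G H A v where
  isBlowup := hA
  not_insertable j hj := by
    have hsub : (⋃ i, A i) ⊆ ⋃ i, Function.update A j (insert v (A j)) i :=
      Set.iUnion_mono fun i _ hx => mem_update_insert_iff.2 (Or.inr hx)
    refine hv ?_
    rw [hmax _ (hA.update_insert (fun i hi => hv (Set.mem_iUnion_of_mem i hi)) hj) hsub]
    exact Set.mem_iUnion_of_mem j (mem_update_insert_iff.2 (Or.inl ⟨rfl, rfl⟩))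
  not_complete h := hnc fun a ha => by
    obtain ⟨i, hi⟩ := Set.mem_iUnion.1 ha
    exact h i a hi

namespace IsUnabsorbable

theorem comp_iso (h : IsUnabsorbable G H A v) (φ : H' ≃g H) :
    IsUnabsorbable G H' (A ∘ φ) v where
  isBlowup := h.isBlowup.comp_iso φ
  not_insertable j hj := h.not_insertable (φ j) fun k hk y hy => by
    rw [← φ.apply_symm_apply k, φ.map_rel_iff]
    exact hj (φ.symm k) (by rintro rfl; simp at hk) y (by simpa using hy)
  not_complete hc := h.not_complete fun i y hy => hc (φ.symm i) y (by simpa using hy)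

theorem false_of_adj_iff (h : IsUnabsorbable G H A v) (j : W)
    (hadj : ∀ k, H.Adj j k → ∀ y ∈ A k, G.Adj v y)
    (hnadj : ∀ k ≠ j, ¬ H.Adj j k → ∀ y ∈ A k, ¬ G.Adj v y) : False :=
  h.not_insertable j fun k hk y hy => by
    by_cases hjk : H.Adj j k
    · exact iff_of_true (hadj k hjk y hy) hjk
    · exact iff_of_false (hnadj k hk hjk y hy) hjk

theorem false_of_fin5 {A : Fin 5 → Set V} {H : SimpleGraph (Fin 5)}
    (h : IsUnabsorbable G H A v) (j : Fin 5) (hH : ∀ k, H.Adj j k ↔ k = j + 1 ∨ k = j + 4)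
    (h₁ : ∀ y ∈ A (j + 1), G.Adj v y) (h₄ : ∀ y ∈ A (j + 4), G.Adj v y)
    (h₂ : ∀ y ∈ A (j + 2), ¬ G.Adj v y) (h₃ : ∀ y ∈ A (j + 3), ¬ G.Adj v y) :
    False := by
  have key : ∀ j k : Fin 5, k ≠ j → ¬ (k = j + 1 ∨ k = j + 4) →
      k = j + 2 ∨ k = j + 3 := by
    decide
  refine h.false_of_adj_iff j (fun k hk => ?_) (fun k hk hnk => ?_)
  · rcases (hH k).1 hk with rfl | rfl
    exacts [h₁, h₄]
  · rcases key j k hk ((hH k).not.1 hnk) with rfl | rfl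
    exacts [h₂, h₃]

end IsUnabsorbable

end Blowup

section Fin5

variable {V : Type*} {G : SimpleGraph V} {A : Fin 5 → Set V} {v : V}

theorem isBlowup_of_adj_succ {H : SimpleGraph (Fin 5)} (hne : ∀ i, (A i).Nonempty)
    (hdisj : ∀ i j, i ≠ j → Disjoint (A i) (A j))
    (hsucc : ∀ i, ∀ x ∈ A i, ∀ y ∈ A (i + 1), (G.Adj x y ↔ H.Adj i (i + 1)))
    (hanti : ∀ i, ∀ x ∈ A i, ∀ y ∈ A (i + 2), ¬ G.Adj x y)
    (hH : ∀ i, ¬ H.Adj i (i + 2)) : IsBlowup G H A where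
  nonempty := hne
  pairwise_disjoint := hdisj
  adj_iff i k hik x hx y hy := by
    have key : ∀ i k : Fin 5, i ≠ k →
        k = i + 1 ∨ i = k + 1 ∨ k = i + 2 ∨ i = k + 2 := by
      decide
    rcases key i k hik with rfl | rfl | rfl | rfl
    · exact hsucc i x hx y hy
    · rw [G.adj_comm, H.adj_comm]
      exact hsucc k y hy x hx
    · exact iff_of_false (hanti i x hx y hy) (hH i)
    · exact iff_of_false (fun h => hanti k y hy x hx h.symm) (fun h => hH k h.symm)

theorem IsBlowup.pathOrCycleBlowup5 {H : SimpleGraph (Fin 5)} (hA : IsBlowup G H A)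
    (hsucc : ∀ i, i ≠ 4 → H.Adj i (i + 1)) (hH : ∀ i, ¬ H.Adj i (i + 2)) :
    PathOrCycleBlowup5 G A := by
  have hne : ∀ i : Fin 5, i ≠ i + 2 := by decide
  refine ⟨hA.nonempty, fun i j hij => hA.pairwise_disjoint hij,
    fun i hi x hx y hy => hA.adj (hsucc i hi) hx hy,
    fun i x hx y hy => hA.not_adj ⟨hne i, hH i⟩ hx hy, ?_⟩
  by_cases h40 : H.Adj 4 0
  · exact Or.inl fun x hx y hy => hA.adj h40 hx hy
  · exact Or.inr fun x hx y hy => hA.not_adj ⟨by decide, h40⟩ hx hy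

theorem pathOrCycleBlowup5_iff :
    PathOrCycleBlowup5 G A ↔ IsBlowup G (cycleGraph 5) A ∨ IsBlowup G (pathGraph 5) A := by
  have hcycle : ∀ i : Fin 5, (cycleGraph 5).Adj i (i + 1) := by decide
  have hpath : ∀ i : Fin 5, i ≠ 4 → (pathGraph 5).Adj i (i + 1) := by decide
  refine ⟨fun ⟨hne, hdisj, hcomp, hanti, h40⟩ => ?_, fun h => ?_⟩
  · rcases h40 with h40 | h40
    · refine Or.inl (isBlowup_of_adj_succ hne hdisj (fun i x hx y hy => ?_) hanti (by decide))
      refine iff_of_true ?_ (hcycle i)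
      rcases eq_or_ne i 4 with rfl | hi
      exacts [h40 x hx y hy, hcomp i hi x hx y hy]
    · refine Or.inr (isBlowup_of_adj_succ hne hdisj (fun i x hx y hy => ?_) hanti (by decide))
      rcases eq_or_ne i 4 with rfl | hi
      · exact iff_of_false (h40 x hx y hy) (by decide)
      · exact iff_of_true (hcomp i hi x hx y hy) (hpath i hi)
  · rcases h with h | h
    exacts [h.pathOrCycleBlowup5 (by decide) (by decide),
      h.pathOrCycleBlowup5 (by decide) (by decide)]

end Fin5

section Cycle

variable {V : Type*} {G : SimpleGraph V} {A : Fin 5 → Set V} {v : V}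

namespace IsUnabsorbable

theorem rotate (h : IsUnabsorbable G (cycleGraph 5) A v) (r : Fin 5) :
    IsUnabsorbable G (cycleGraph 5) (fun i => A (r + i)) v :=
  h.comp_iso (cycleGraph.rotation 3 r)

theorem reflect (h : IsUnabsorbable G (cycleGraph 5) A v) (r : Fin 5) :
    IsUnabsorbable G (cycleGraph 5) (fun i => A (r - i)) v :=
  h.comp_iso (cycleGraph.reflection 3 r)

theorem cycle_complete_four (h : IsUnabsorbable G (cycleGraph 5) A v)
    (hbull : _root_.Free G bull) (hhouse : _root_.Free G house) {x₁ x₂ : V}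
    (hx₁ : x₁ ∈ A 1) (hx₂ : x₂ ∈ A 2) (hv₁ : G.Adj v x₁) (hv₂ : G.Adj v x₂)
    (h₃ : ∀ y ∈ A 3, G.Adj v y) : ∀ y ∈ A 4, G.Adj v y := by
  have hA := h.isBlowup
  obtain ⟨w, hw⟩ := hA.nonempty 3
  intro t ht
  by_contra hvt
  have h₀ : ∀ u ∈ A 0, ¬ G.Adj v u := fun u hu hvu =>
    hhouse.elim_house (hA.not_adj (by decide) hu hw)
      (hA.not_adj (by decide) hw hx₁) (hA.not_adj (by decide) hx₁ ht)
      (fun h => hvt h.symm) (hA.adj (by decide) hu hx₁) (hA.adj (by decide) hu ht) hvu.symm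
      (hA.adj (by decide) hw ht) (h₃ w hw).symm hv₁.symm
  have h₁ : ∀ y ∈ A 1, G.Adj v y := fun x hx => by_contra fun hvx =>
    hbull.elim_bull (hA.adj (by decide) hx₂ hw) (h₃ w hw).symm hv₂.symm
      (hA.adj (by decide) hx₂ hx) (hA.adj (by decide) hw ht)
      (hA.not_adj (by decide) hx₂ ht) (hA.not_adj (by decide) hw hx)
      hvx hvt (hA.not_adj (by decide) hx ht)
  have h₄ : ∀ y ∈ A 4, ¬ G.Adj v y := fun t' ht' hvt' => by
    obtain ⟨u, hu⟩ := hA.nonempty 0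
    exact hhouse.elim_house (hA.not_adj (by decide) ht' hx₁)
      (hA.not_adj (by decide) hx₁ hw) (hA.not_adj (by decide) hw hu)
      (fun h => h₀ u hu h.symm) (hA.adj (by decide) ht' hw) (hA.adj (by decide) ht' hu)
      hvt'.symm (hA.adj (by decide) hx₁ hu) hv₁.symm (h₃ w hw).symm
  exact h.false_of_fin5 2 (by decide) h₃ h₁ h₄ h₀

theorem cycle_not_complete_three (h : IsUnabsorbable G (cycleGraph 5) A v)
    (hbull : _root_.Free G bull) (hhouse : _root_.Free G house) {x₁ x₂ : V}
    (hx₁ : x₁ ∈ A 1) (hx₂ : x₂ ∈ A 2) (hv₁ : G.Adj v x₁) (hv₂ : G.Adj v x₂) :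
    ¬ ∀ y ∈ A 3, G.Adj v y := by
  intro h₃
  have hA := h.isBlowup
  have h₄ := h.cycle_complete_four hbull hhouse hx₁ hx₂ hv₁ hv₂ h₃
  obtain ⟨w, hw⟩ := hA.nonempty 3
  obtain ⟨t, ht⟩ := hA.nonempty 4
  by_cases h₂ : ∀ y ∈ A 2, G.Adj v y
  · have h₀ := (h.rotate 1).cycle_complete_four hbull hhouse hx₂ hw hv₂ (h₃ w hw) h₄
    have h₁ := (h.rotate 2).cycle_complete_four hbull hhouse hw ht (h₃ w hw) (h₄ t ht) h₀
    exact h.not_complete fun i => by fin_cases i <;> assumption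
  · obtain ⟨x, hx, hvx⟩ := not_forall₂.1 h₂
    have h₀ : ∀ u ∈ A 0, G.Adj v u := fun u hu => by_contra fun hvu =>
      hbull.elim_bull (hA.adj (by decide) hw ht) (h₄ t ht).symm (h₃ w hw).symm
        (hA.adj (by decide) hw hx) (hA.adj (by decide) ht hu)
        (hA.not_adj (by decide) hw hu) (hA.not_adj (by decide) ht hx)
        hvx hvu (hA.not_adj (by decide) hx hu)
    obtain ⟨u, hu⟩ := hA.nonempty 0
    exact hhouse.elim_house (hA.not_adj (by decide) hx₁ hw)
      (hA.not_adj (by decide) hw hu) (hA.not_adj (by decide) hu hx)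
      (fun h => hvx h.symm) (hA.adj (by decide) hx₁ hu) (hA.adj (by decide) hx₁ hx) hv₁.symm
      (hA.adj (by decide) hw hx) (h₃ w hw).symm (h₀ u hu).symm

theorem cycle_not_adj_of_adj (h : IsUnabsorbable G (cycleGraph 5) A v)
    (hbull : _root_.Free G bull) (hhouse : _root_.Free G house) {x₁ x₂ : V}
    (hx₁ : x₁ ∈ A 1) (hx₂ : x₂ ∈ A 2) (hv₁ : G.Adj v x₁) : ¬ G.Adj v x₂ := by
  intro hv₂
  have hA := h.isBlowup
  refine h.cycle_not_complete_three hbull hhouse hx₁ hx₂ hv₁ hv₂ fun w hw =>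
    by_contra fun hvw => ?_
  have h₀ : ∀ u ∈ A 0, G.Adj v u := fun u hu => by_contra fun hvu =>
    hbull.elim_bull (hA.adj (by decide) hx₁ hx₂) hv₂.symm hv₁.symm
      (hA.adj (by decide) hx₁ hu) (hA.adj (by decide) hx₂ hw)
      (hA.not_adj (by decide) hx₁ hw) (hA.not_adj (by decide) hx₂ hu)
      hvu hvw (hA.not_adj (by decide) hu hw)
  -- reading the cycle backwards from `A 3` turns `A 0` into its third part
  exact (h.reflect 3).cycle_not_complete_three hbull hhouse hx₂ hx₁ hv₂ hv₁ h₀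

theorem cycle_anticomplete (h : IsUnabsorbable G (cycleGraph 5) A v)
    (hbull : _root_.Free G bull) (hhouse : _root_.Free G house) (i : Fin 5) :
    (∀ a ∈ A i, ¬ G.Adj v a) ∨ ∀ a ∈ A (i + 1), ¬ G.Adj v a := by
  refine or_iff_not_imp_left.2 fun hi y hy hvy => ?_
  obtain ⟨x, hx, hvx⟩ := not_forall₂.1 hi
  refine (h.rotate (i - 1)).cycle_not_adj_of_adj hbull hhouse (x₁ := x) ?_ ?_
    (not_not.1 hvx) hvy
  · simpa using hx
  · rwa [show i - 1 + 2 = i + 1 by abel]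

end IsUnabsorbable

end Cycle

section Path

variable {V : Type*} {G : SimpleGraph V} {A : Fin 5 → Set V} {v : V}

namespace IsUnabsorbable

theorem reverse (h : IsUnabsorbable G (pathGraph 5) A v) :
    IsUnabsorbable G (pathGraph 5) (fun i => A i.rev) v :=
  h.comp_iso (pathGraph.reflection 5)

theorem path_not_complete_four (h : IsUnabsorbable G (pathGraph 5) A v)
    (hbull : _root_.Free G bull) (hhouse : _root_.Free G house) {x₁ x₂ : V}
    (hx₁ : x₁ ∈ A 1) (hx₂ : x₂ ∈ A 2) (hv₁ : G.Adj v x₁) (hv₂ : G.Adj v x₂)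
    (h₃ : ∀ y ∈ A 3, G.Adj v y) : ¬ ∀ y ∈ A 4, G.Adj v y := by
  intro h₄
  have hA := h.isBlowup
  obtain ⟨w, hw⟩ := hA.nonempty 3
  obtain ⟨t, ht⟩ := hA.nonempty 4
  have h₀ : ∀ u ∈ A 0, G.Adj v u := fun u hu => by_contra fun hvu =>
    hbull.elim_bull hv₁.symm hv₂ (hA.adj (by decide) hx₁ hx₂) (hA.adj (by decide) hx₁ hu)
      (h₄ t ht) (hA.not_adj (by decide) hx₁ ht) hvu (hA.not_adj (by decide) hx₂ hu)
      (hA.not_adj (by decide) hx₂ ht) (hA.not_adj (by decide) hu ht)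
  obtain ⟨u, hu⟩ := hA.nonempty 0
  have h₁ : ∀ y ∈ A 1, G.Adj v y := fun x hx => by_contra fun hvx =>
    hhouse.elim_house (hA.not_adj (by decide) hx₂ hu) (hA.not_adj (by decide) hu hw)
      (hA.not_adj (by decide) hw hx) (fun h => hvx h.symm) (hA.adj (by decide) hx₂ hw)
      (hA.adj (by decide) hx₂ hx) hv₂.symm (hA.adj (by decide) hu hx) (h₀ u hu).symm
      (h₃ w hw).symm
  have h₂ : ∀ y ∈ A 2, G.Adj v y := fun x hx => by_contra fun hvx =>
    hhouse.elim_house (hA.not_adj (by decide) hx₁ hw) (hA.not_adj (by decide) hw hu)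
      (hA.not_adj (by decide) hu hx) (fun h => hvx h.symm) (hA.adj (by decide) hx₁ hu)
      (hA.adj (by decide) hx₁ hx) hv₁.symm (hA.adj (by decide) hw hx) (h₃ w hw).symm
      (h₀ u hu).symm
  exact h.not_complete fun i => by fin_cases i <;> assumption

theorem path_not_complete_three (h : IsUnabsorbable G (pathGraph 5) A v)
    (hbull : _root_.Free G bull) (hhouse : _root_.Free G house) {x₁ x₂ : V}
    (hx₁ : x₁ ∈ A 1) (hx₂ : x₂ ∈ A 2) (hv₁ : G.Adj v x₁) (hv₂ : G.Adj v x₂) :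
    ¬ ∀ y ∈ A 3, G.Adj v y := by
  intro h₃
  have hA := h.isBlowup
  obtain ⟨w, hw⟩ := hA.nonempty 3
  obtain ⟨t, ht, hvt⟩ :=
    not_forall₂.1 (h.path_not_complete_four hbull hhouse hx₁ hx₂ hv₁ hv₂ h₃)
  have h₀ : ∀ u ∈ A 0, ¬ G.Adj v u := fun u hu hvu =>
    hbull.elim_bull (h₃ w hw).symm hv₂ (hA.adj (by decide) hw hx₂) (hA.adj (by decide) hw ht)
      hvu (hA.not_adj (by decide) hw hu) hvt (hA.not_adj (by decide) hx₂ ht)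
      (hA.not_adj (by decide) hx₂ hu) (hA.not_adj (by decide) ht hu)
  have h₁ : ∀ y ∈ A 1, G.Adj v y := fun x hx => by_contra fun hvx =>
    hbull.elim_bull (hA.adj (by decide) hx₂ hw) (h₃ w hw).symm hv₂.symm
      (hA.adj (by decide) hx₂ hx) (hA.adj (by decide) hw ht) (hA.not_adj (by decide) hx₂ ht)
      (hA.not_adj (by decide) hw hx) hvx hvt (hA.not_adj (by decide) hx ht)
  obtain ⟨u, hu⟩ := hA.nonempty 0
  have h₄ : ∀ y ∈ A 4, ¬ G.Adj v y := fun t' ht' hvt' =>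
    hbull.elim_bull hv₁.symm hv₂ (hA.adj (by decide) hx₁ hx₂) (hA.adj (by decide) hx₁ hu)
      hvt' (hA.not_adj (by decide) hx₁ ht') (h₀ u hu) (hA.not_adj (by decide) hx₂ hu)
      (hA.not_adj (by decide) hx₂ ht') (hA.not_adj (by decide) hu ht')
  exact h.false_of_fin5 2 (by decide) h₃ h₁ h₄ h₀

theorem path_not_adj_of_adj (h : IsUnabsorbable G (pathGraph 5) A v)
    (hbull : _root_.Free G bull) (hhouse : _root_.Free G house) {x₁ x₂ : V}
    (hx₁ : x₁ ∈ A 1) (hx₂ : x₂ ∈ A 2) (hv₁ : G.Adj v x₁) : ¬ G.Adj v x₂ := by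
  intro hv₂
  have hA := h.isBlowup
  obtain ⟨w', hw', hvw'⟩ :=
    not_forall₂.1 (h.path_not_complete_three hbull hhouse hx₁ hx₂ hv₁ hv₂)
  have h₀ : ∀ u ∈ A 0, G.Adj v u := fun u hu => by_contra fun hvu =>
    hbull.elim_bull (hA.adj (by decide) hx₁ hx₂) hv₂.symm hv₁.symm
      (hA.adj (by decide) hx₁ hu) (hA.adj (by decide) hx₂ hw')
      (hA.not_adj (by decide) hx₁ hw') (hA.not_adj (by decide) hx₂ hu) hvu hvw'
      (hA.not_adj (by decide) hu hw')
  have h₄ : ∀ y ∈ A 4, ¬ G.Adj v y := fun t ht hvt =>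
    hhouse.elim_house (hA.not_adj (by decide) hx₂ ht) (hA.not_adj (by decide) ht hx₁)
      (hA.not_adj (by decide) hx₁ hw') (fun h => hvw' h.symm) (hA.adj (by decide) hx₂ hx₁)
      (hA.adj (by decide) hx₂ hw') hv₂.symm (hA.adj (by decide) ht hw') hvt.symm hv₁.symm
  obtain ⟨t, ht⟩ := hA.nonempty 4
  have h₃ : ∀ y ∈ A 3, ¬ G.Adj v y := fun w hw hvw => by
    obtain ⟨u, hu⟩ := hA.nonempty 0
    exact hbull.elim_bull hvw.symm hv₂ (hA.adj (by decide) hw hx₂) (hA.adj (by decide) hw ht)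
      (h₀ u hu) (hA.not_adj (by decide) hw hu) (h₄ t ht) (hA.not_adj (by decide) hx₂ ht)
      (hA.not_adj (by decide) hx₂ hu) (hA.not_adj (by decide) ht hu)
  have h₂ : ∀ y ∈ A 2, G.Adj v y := fun x hx => by_contra fun hvx => by
    by_cases hx₂x : G.Adj x₂ x
    · exact hbull.elim_bull (hA.adj (by decide) hx₂ hw') (hA.adj (by decide) hw' hx) hx₂x
        hv₂.symm (hA.adj (by decide) hw' ht) (hA.not_adj (by decide) hx₂ ht)
        (fun h => hvw' h.symm) (fun h => hvx h.symm) (hA.not_adj (by decide) hx ht) (h₄ t ht)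
    · exact hhouse.elim_house (hA.not_adj (by decide) hx₁ hw') (fun h => hvw' h.symm) hvx
        (fun h => hx₂x h.symm) hv₁.symm (hA.adj (by decide) hx₁ hx)
        (hA.adj (by decide) hx₁ hx₂) (hA.adj (by decide) hw' hx) (hA.adj (by decide) hw' hx₂)
        hv₂
  exact h.false_of_fin5 1 (by decide) h₂ h₀ h₃ h₄

theorem path_not_adj_zero_of_adj_one (h : IsUnabsorbable G (pathGraph 5) A v)
    (hbull : _root_.Free G bull) (hhouse : _root_.Free G house) {x₀ x₁ : V}
    (hx₀ : x₀ ∈ A 0) (hx₁ : x₁ ∈ A 1) (hv₁ : G.Adj v x₁) : ¬ G.Adj v x₀ := by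
  intro hv₀
  have hA := h.isBlowup
  have h₂ : ∀ y ∈ A 2, ¬ G.Adj v y := fun y hy =>
    h.path_not_adj_of_adj hbull hhouse hx₁ hy hv₁
  obtain ⟨x₂, hx₂⟩ := hA.nonempty 2
  have h₃ : ∀ y ∈ A 3, ¬ G.Adj v y := fun w hw hvw =>
    hhouse.elim_house (hA.not_adj (by decide) hx₁ hw) (hA.not_adj (by decide) hw hx₀)
      (hA.not_adj (by decide) hx₀ hx₂) (fun h => h₂ x₂ hx₂ h.symm)
      (hA.adj (by decide) hx₁ hx₀) (hA.adj (by decide) hx₁ hx₂) hv₁.symm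
      (hA.adj (by decide) hw hx₂) hvw.symm hv₀.symm
  have h₄ : ∀ y ∈ A 4, ¬ G.Adj v y := fun t ht hvt =>
    hbull.elim_bull hv₁.symm hv₀ (hA.adj (by decide) hx₁ hx₀)
      (hA.adj (by decide) hx₁ hx₂) hvt (hA.not_adj (by decide) hx₁ ht) (h₂ x₂ hx₂)
      (hA.not_adj (by decide) hx₀ hx₂) (hA.not_adj (by decide) hx₀ ht)
      (hA.not_adj (by decide) hx₂ ht)
  obtain ⟨w, hw⟩ := hA.nonempty 3
  have h₁ : ∀ y ∈ A 1, G.Adj v y := fun x hx => by_contra fun hvx => by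
    by_cases hx₁x : G.Adj x₁ x
    · exact hbull.elim_bull (hA.adj (by decide) hx₁ hx₂) (hA.adj (by decide) hx₂ hx) hx₁x
        hv₁.symm (hA.adj (by decide) hx₂ hw) (hA.not_adj (by decide) hx₁ hw)
        (fun h => h₂ x₂ hx₂ h.symm) (fun h => hvx h.symm) (hA.not_adj (by decide) hx hw)
        (h₃ w hw)
    · exact hhouse.elim_house (hA.not_adj (by decide) hx₀ hx₂)
        (fun h => h₂ x₂ hx₂ h.symm) hvx (fun h => hx₁x h.symm) hv₀.symm
        (hA.adj (by decide) hx₀ hx) (hA.adj (by decide) hx₀ hx₁) (hA.adj (by decide) hx₂ hx)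
        (hA.adj (by decide) hx₂ hx₁) hv₁
  have hnbr : ∀ k : Fin 5, (pathGraph 5).Adj 0 k → k = 1 := by decide
  refine h.false_of_adj_iff 0 (fun k hk => hnbr k hk ▸ h₁) fun k hk hnk => ?_
  fin_cases k
  exacts [absurd rfl hk, absurd (by decide) hnk, h₂, h₃, h₄]

theorem path_anticomplete (h : IsUnabsorbable G (pathGraph 5) A v)
    (hbull : _root_.Free G bull) (hhouse : _root_.Free G house) (i : Fin 5) (hi : i ≠ 4) :
    (∀ a ∈ A i, ¬ G.Adj v a) ∨ ∀ a ∈ A (i + 1), ¬ G.Adj v a := by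
  refine or_iff_not_imp_left.2 fun hnot y hy hvy => ?_
  obtain ⟨x, hx, hvx⟩ := not_forall₂.1 hnot
  replace hvx := not_not.1 hvx
  fin_cases i
  · exact h.path_not_adj_zero_of_adj_one hbull hhouse hx hy hvy hvx
  · exact h.path_not_adj_of_adj hbull hhouse hx hy hvx hvy
  · exact h.reverse.path_not_adj_of_adj hbull hhouse hy hx hvy hvx
  · exact h.reverse.path_not_adj_zero_of_adj_one hbull hhouse hy hx hvx hvy
  · exact absurd rfl hi

end IsUnabsorbable

end Path

theorem stmt7_general {V : Type*} (G : SimpleGraph V)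
    (hhouse : _root_.Free G house) (hbull : _root_.Free G bull)
    (A : Fin 5 → Set V) (hA : PathOrCycleBlowup5 G A)
    (hmax : ∀ A' : Fin 5 → Set V, PathOrCycleBlowup5 G A' →
      (⋃ i, A i) ⊆ (⋃ i, A' i) → (⋃ i, A i) = (⋃ i, A' i)) :
    ∀ v ∉ (⋃ i, A i), ¬ (∀ a ∈ (⋃ i, A i), G.Adj v a) →
      (∀ i : Fin 5, i ≠ 4 →
        ((∀ a ∈ A i, ¬ G.Adj v a) ∨ (∀ a ∈ A (i + 1), ¬ G.Adj v a))) ∧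
      ((∀ x ∈ A 4, ∀ y ∈ A 0, G.Adj x y) →
        ((∀ a ∈ A 4, ¬ G.Adj v a) ∨ (∀ a ∈ A 0, ¬ G.Adj v a))) := by
  intro v hv hnc
  rcases pathOrCycleBlowup5_iff.1 hA with hC | hP
  · have h := hC.isUnabsorbable
      (fun A' hA' => hmax A' (pathOrCycleBlowup5_iff.2 (Or.inl hA'))) hv hnc
    exact ⟨fun i _ => h.cycle_anticomplete hbull hhouse i,
      fun _ => h.cycle_anticomplete hbull hhouse 4⟩
  · have h := hP.isUnabsorbable
      (fun A' hA' => hmax A' (pathOrCycleBlowup5_iff.2 (Or.inr hA'))) hv hnc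
    refine ⟨h.path_anticomplete hbull hhouse, fun h40 => ?_⟩
    obtain ⟨x, hx⟩ := hP.nonempty 4
    obtain ⟨y, hy⟩ := hP.nonempty 0
    exact absurd (h40 x hx y hy) (hP.not_adj (by decide) hx hy)

/-- In a prime (house, bull)-free graph with a maximal P5/C5 blowup, every vertex outside
`A` that is not complete to `A` is anticomplete to at least one of any two consecutive
parts. -/
theorem stmt7 {V : Type*} [Fintype V] (G : SimpleGraph V)
    (hprime : IsPrime G) (hhouse : _root_.Free G house) (hbull : _root_.Free G bull)
    (A : Fin 5 → Set V) (hA : PathOrCycleBlowup5 G A)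
    (hmax : ∀ A' : Fin 5 → Set V, PathOrCycleBlowup5 G A' →
      (⋃ i, A i) ⊆ (⋃ i, A' i) → (⋃ i, A i) = (⋃ i, A' i)) :
    ∀ v ∉ (⋃ i, A i), ¬ (∀ a ∈ (⋃ i, A i), G.Adj v a) →
      (∀ i : Fin 5, i ≠ 4 →
        ((∀ a ∈ A i, ¬ G.Adj v a) ∨ (∀ a ∈ A (i + 1), ¬ G.Adj v a))) ∧
      ((∀ x ∈ A 4, ∀ y ∈ A 0, G.Adj x y) →
        ((∀ a ∈ A 4, ¬ G.Adj v a) ∨ (∀ a ∈ A 0, ¬ G.Adj v a))) :=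
  stmt7_general G hhouse hbull A hA hmax
end

section
/- In a bull-free graph G, let B = {v_1,...,v_ℓ} be the vertex set of an induced cycle of length ℓ ≥ 6 with edges v_i v_{i+1} (indices mod ℓ). Then for every vertex x outside B, the set N(x) ∩ B is either a stable set, or equal to B, or equal to {v_{i−1}, v_i, v_{i+1}} for some i, or equal to {v_{i−1}, v_i, v_{i+1}, v_{i+3}} for some i with ℓ = 6. -/
open SimpleGraph

/-! If `x` has two consecutive neighbours on the cycle, a bull with triangle `x v(i) v(i+1)` and
pendants `v(i-1)`, `v(i+2)` gives three consecutive neighbours `c-1, c, c+1`. A bull with triangle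
`x v(p+2) v(p+3)` shows that four consecutive neighbours propagate around the whole cycle, so unless
`x` sees everything it misses `c ± 2`. Then a bull with triangle `x v(c) v(c+1)` and pendants
`v(m)`, `v(c+2)` forces every further neighbour `m` to be `c + 3`, and symmetrically `c - 3`;
hence `ℓ ∣ 6`. -/

section

variable {V : Type*} {G : SimpleGraph V}

theorem nonempty_bull_embedding_of_adj {a b c d e : V}
    (hab : G.Adj a b) (hac : G.Adj a c) (hbc : G.Adj b c) (had : G.Adj a d) (hbe : G.Adj b e)
    (hbd : ¬ G.Adj b d) (hcd : ¬ G.Adj c d) (hae : ¬ G.Adj a e) (hce : ¬ G.Adj c e)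
    (hde : ¬ G.Adj d e) :
    Nonempty (bull ↪g G) := by
  have hbd' : b ≠ d := fun h => hde (h ▸ hbe)
  have hcd' : c ≠ d := fun h => hbd (h ▸ hbc)
  have hae' : a ≠ e := fun h => hce (h ▸ hac.symm)
  have hce' : c ≠ e := fun h => hae (h ▸ hac)
  have hde' : d ≠ e := fun h => hae (h ▸ had)
  refine ⟨⟨⟨![a, b, c, d, e], fun p q h => ?_⟩, fun {p q} => ?_⟩⟩
  · fin_cases p <;> fin_cases q <;> simp_all [hab.ne, hac.ne, hbc.ne, had.ne, hbe.ne]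
  · show G.Adj (![a, b, c, d, e] p) (![a, b, c, d, e] q) ↔ _
    fin_cases p <;> fin_cases q <;>
      simp [bull, fromRel_adj, hab, hac, hbc, had, hbe, hbd, hcd, hae, hce, hde, adj_comm]

theorem ZMod.natCast_ne_zero_of_pos_of_lt {ℓ n : ℕ} (h0 : 0 < n) (hn : n < ℓ) :
    (n : ZMod ℓ) ≠ 0 :=
  fun h => (Nat.le_of_dvd h0 ((ZMod.natCast_eq_zero_iff n ℓ).1 h)).not_gt hn

def IsInducedCycle (G : SimpleGraph V) {ℓ : ℕ} (v : ZMod ℓ → V) : Prop :=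
  ∀ i j, G.Adj (v i) (v j) ↔ (j = i + 1 ∨ i = j + 1)

namespace IsInducedCycle

variable {ℓ : ℕ} {v : ZMod ℓ → V}

theorem adj_add_one (hv : IsInducedCycle G v) (i : ZMod ℓ) : G.Adj (v i) (v (i + 1)) :=
  (hv i (i + 1)).2 (Or.inl rfl)

theorem not_adj (hv : IsInducedCycle G v) {i j : ZMod ℓ} (h₁ : j ≠ i + 1) (h₂ : i ≠ j + 1) :
    ¬ G.Adj (v i) (v j) := by
  rw [hv]
  tauto

theorem not_adj_of_eq_add (hv : IsInducedCycle G v) {i j : ZMod ℓ} {d : ℕ} (hd : 2 ≤ d)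
    (hdℓ : d + 2 ≤ ℓ) (h : j = i + d ∨ i = j + d) : ¬ G.Adj (v i) (v j) := by
  have hsub : ((d - 1 : ℕ) : ZMod ℓ) ≠ 0 :=
    ZMod.natCast_ne_zero_of_pos_of_lt (by omega) (by omega)
  have hadd : ((d + 1 : ℕ) : ZMod ℓ) ≠ 0 :=
    ZMod.natCast_ne_zero_of_pos_of_lt (by omega) (by omega)
  push_cast [Nat.cast_sub (by omega : 1 ≤ d)] at hsub hadd
  refine hv.not_adj ?_ ?_ <;> rcases h with rfl | rfl <;> intro h
  · exact hsub (by linear_combination h)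
  · exact hadd (by linear_combination -h)
  · exact hadd (by linear_combination -h)
  · exact hsub (by linear_combination h)

theorem comp_neg (hv : IsInducedCycle G v) : IsInducedCycle G (v ∘ Neg.neg) := by
  intro i j
  rw [Function.comp_apply, Function.comp_apply, hv (-i) (-j)]
  constructor <;> rintro (h | h) <;> [right; left; right; left] <;> linear_combination h

variable {x : V}

theorem exists_adj_sub_one_adj_adj_add_one (hv : IsInducedCycle G v)
    (hbull : _root_.Free G bull) (hℓ : 5 ≤ ℓ) {i : ZMod ℓ} (h₀ : G.Adj x (v i))
    (h₁ : G.Adj x (v (i + 1))) :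
    ∃ c, G.Adj x (v (c - 1)) ∧ G.Adj x (v c) ∧ G.Adj x (v (c + 1)) := by
  by_contra! h
  have hsub₁ : ¬ G.Adj x (v (i - 1)) := fun hsub₁ => h i hsub₁ h₀ h₁
  have h₂ : ¬ G.Adj x (v (i + 2)) := fun h₂ =>
    h (i + 1) (by rwa [add_sub_cancel_right]) h₁ (by convert h₂ using 2; ring)
  exact hbull (nonempty_bull_embedding_of_adj (d := v (i - 1)) (e := v (i + 2))
    (hv.adj_add_one i) h₀.symm h₁.symm
    ((hv _ _).2 (.inr (by ring))) ((hv _ _).2 (.inl (by ring)))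
    (hv.not_adj_of_eq_add (d := 2) le_rfl (by omega) (.inr (by ring))) hsub₁
    (hv.not_adj_of_eq_add (d := 2) le_rfl (by omega) (.inl (by ring))) h₂
    (hv.not_adj_of_eq_add (d := 3) (by norm_num) (by omega) (.inl (by ring))))

theorem adj_add_four (hv : IsInducedCycle G v) (hbull : _root_.Free G bull) (hℓ : 6 ≤ ℓ)
    {p : ZMod ℓ} (h₀ : G.Adj x (v p)) (h₂ : G.Adj x (v (p + 2))) (h₃ : G.Adj x (v (p + 3))) :
    G.Adj x (v (p + 4)) := by
  by_contra h₄
  exact hbull (nonempty_bull_embedding_of_adj h₃ h₂ ((hv _ _).2 (.inr (by ring))) h₀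
    ((hv _ _).2 (.inl (by ring)))
    (hv.not_adj_of_eq_add (d := 3) (by norm_num) (by omega) (.inr (by ring)))
    (hv.not_adj_of_eq_add (d := 2) le_rfl (by omega) (.inr (by ring))) h₄
    (hv.not_adj_of_eq_add (d := 2) le_rfl (by omega) (.inl (by ring)))
    (hv.not_adj_of_eq_add (d := 4) (by norm_num) (by omega) (.inl (by ring))))

theorem forall_adj_of_adj_add_two (hv : IsInducedCycle G v) (hbull : _root_.Free G bull)
    (hℓ : 6 ≤ ℓ) {c : ZMod ℓ} (hsub₁ : G.Adj x (v (c - 1))) (h₀ : G.Adj x (v c))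
    (h₁ : G.Adj x (v (c + 1))) (h₂ : G.Adj x (v (c + 2))) (j : ZMod ℓ) : G.Adj x (v j) := by
  have : NeZero ℓ := ⟨by omega⟩
  have hall : ∀ n : ℕ, G.Adj x (v (c - 1 + n)) := by
    intro n
    induction n using Nat.strong_induction_on with
    | _ n ih =>
      match n with
      | 0 => simpa using hsub₁
      | 1 => simpa using h₀
      | 2 => convert h₁ using 2; push_cast; ring
      | 3 => convert h₂ using 2; push_cast; ring
      | n + 4 =>
        convert hv.adj_add_four hbull hℓ (ih n (by omega))
          (by convert ih (n + 2) (by omega) using 2; push_cast; ring)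
          (by convert ih (n + 3) (by omega) using 2; push_cast; ring) using 2
        push_cast; ring
  simpa using hall (j - (c - 1)).val

theorem forall_adj_of_adj_sub_two (hv : IsInducedCycle G v) (hbull : _root_.Free G bull)
    (hℓ : 6 ≤ ℓ) {c : ZMod ℓ} (hsub₂ : G.Adj x (v (c - 2))) (hsub₁ : G.Adj x (v (c - 1)))
    (h₀ : G.Adj x (v c)) (h₁ : G.Adj x (v (c + 1))) (j : ZMod ℓ) : G.Adj x (v j) :=
  hv.forall_adj_of_adj_add_two hbull hℓ (by convert hsub₂ using 2; ring) hsub₁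
    (by rwa [sub_add_cancel]) (by convert h₁ using 2; ring) j

theorem eq_add_three_of_adj (hv : IsInducedCycle G v) (hbull : _root_.Free G bull)
    (hℓ : 4 ≤ ℓ) {c m : ZMod ℓ} (h₀ : G.Adj x (v c)) (h₁ : G.Adj x (v (c + 1)))
    (h₂ : ¬ G.Adj x (v (c + 2))) (hm : G.Adj x (v m)) (hmsub₁ : m ≠ c - 1) (hm₀ : m ≠ c)
    (hm₁ : m ≠ c + 1) : m = c + 3 := by
  have hm₂ : m ≠ c + 2 := by rintro rfl; exact h₂ hm
  by_contra hm₃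
  exact hbull (nonempty_bull_embedding_of_adj h₁ h₀ ((hv _ _).2 (.inr rfl)) hm
    ((hv _ _).2 (.inl (by ring))) (hv.not_adj (by grind) (by grind))
    (hv.not_adj (by grind) (by grind)) h₂
    (hv.not_adj_of_eq_add (d := 2) le_rfl hℓ (.inl (by ring)))
    (hv.not_adj (by grind) (by grind)))

theorem eq_sub_three_of_adj (hv : IsInducedCycle G v) (hbull : _root_.Free G bull)
    (hℓ : 4 ≤ ℓ) {c m : ZMod ℓ} (h₀ : G.Adj x (v c)) (hsub₁ : G.Adj x (v (c - 1)))
    (hsub₂ : ¬ G.Adj x (v (c - 2))) (hm : G.Adj x (v m)) (hmsub₁ : m ≠ c - 1) (hm₀ : m ≠ c)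
    (hm₁ : m ≠ c + 1) : m = c - 3 := by
  have := hv.comp_neg.eq_add_three_of_adj hbull hℓ (c := -c) (m := -m) (x := x)
    (by simpa using h₀) (by simpa [neg_add_eq_sub] using hsub₁)
    (by simpa [neg_add_eq_sub] using hsub₂) (by simpa using hm)
    (by grind) (by grind) (by grind)
  linear_combination -this

theorem setOf_adj_of_three_consecutive (hv : IsInducedCycle G v) (hbull : _root_.Free G bull)
    (hℓ : 6 ≤ ℓ) {c : ZMod ℓ} (hsub₁ : G.Adj x (v (c - 1))) (h₀ : G.Adj x (v c))
    (h₁ : G.Adj x (v (c + 1))) (hall : ¬ ∀ j, G.Adj x (v j)) :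
    {j | G.Adj x (v j)} = {c - 1, c, c + 1} ∨
      (ℓ = 6 ∧ {j | G.Adj x (v j)} = {c - 1, c, c + 1, c + 3}) := by
  have h₂ : ¬ G.Adj x (v (c + 2)) := fun h₂ =>
    hall (hv.forall_adj_of_adj_add_two hbull hℓ hsub₁ h₀ h₁ h₂)
  have hsub₂ : ¬ G.Adj x (v (c - 2)) := fun hsub₂ =>
    hall (hv.forall_adj_of_adj_sub_two hbull hℓ hsub₂ hsub₁ h₀ h₁)
  by_cases hext : ∀ m, G.Adj x (v m) → m ∈ ({c - 1, c, c + 1} : Set (ZMod ℓ))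
  · refine .inl (Set.Subset.antisymm hext ?_)
    rintro j (rfl | rfl | rfl)
    exacts [hsub₁, h₀, h₁]
  simp only [not_forall, Set.mem_insert_iff, Set.mem_singleton_iff, not_or] at hext
  obtain ⟨m, hm, hmsub₁, hm₀, hm₁⟩ := hext
  have hout : ∀ j, G.Adj x (v j) → j ≠ c - 1 → j ≠ c → j ≠ c + 1 → j = c + 3 :=
    fun j => hv.eq_add_three_of_adj hbull (by omega) h₀ h₁ h₂
  have hadd := hout m hm hmsub₁ hm₀ hm₁
  have hsub := hv.eq_sub_three_of_adj hbull (by omega) h₀ hsub₁ hsub₂ hm hmsub₁ hm₀ hm₁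
  have hℓ6 : ℓ = 6 := by
    by_contra hne
    exact ZMod.natCast_ne_zero_of_pos_of_lt (ℓ := ℓ) (n := 6) (by norm_num) (by omega)
      (by push_cast; linear_combination hsub - hadd)
  refine .inr ⟨hℓ6, Set.Subset.antisymm (fun j hj => ?_) ?_⟩
  · simp only [Set.mem_insert_iff, Set.mem_singleton_iff]
    by_contra! hj'
    exact hj'.2.2.2 (hout j hj hj'.1 hj'.2.1 hj'.2.2.1)
  · rintro j (rfl | rfl | rfl | rfl)
    exacts [hsub₁, h₀, h₁, hadd ▸ hm]

end IsInducedCycle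

end

theorem stmt8_general {V : Type*} (G : SimpleGraph V) (hbull : _root_.Free G bull)
    (ℓ : ℕ) (hℓ : 6 ≤ ℓ) (v : ZMod ℓ → V)
    (hadj : ∀ i j, G.Adj (v i) (v j) ↔ (j = i + 1 ∨ i = j + 1)) :
    ∀ x, x ∉ Set.range v →
      ({i | G.Adj x (v i)} : Set (ZMod ℓ)).Pairwise (fun i j => ¬ G.Adj (v i) (v j)) ∨
      {i | G.Adj x (v i)} = (Set.univ : Set (ZMod ℓ)) ∨
      (∃ i : ZMod ℓ, {j | G.Adj x (v j)} = ({i - 1, i, i + 1} : Set (ZMod ℓ))) ∨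
      (ℓ = 6 ∧
        ∃ i : ZMod ℓ, {j | G.Adj x (v j)} = ({i - 1, i, i + 1, i + 3} : Set (ZMod ℓ))) := by
  intro x _
  have hv : IsInducedCycle G v := hadj
  by_cases hpair : ∃ i, G.Adj x (v i) ∧ G.Adj x (v (i + 1))
  · obtain ⟨i, hi, hi₁⟩ := hpair
    obtain ⟨c, hsub₁, h₀, h₁⟩ := hv.exists_adj_sub_one_adj_adj_add_one hbull (by omega) hi hi₁
    by_cases hall : ∀ j, G.Adj x (v j)
    · exact .inr (.inl (Set.eq_univ_of_forall hall))
    rcases hv.setOf_adj_of_three_consecutive hbull hℓ hsub₁ h₀ h₁ hall with hN | ⟨hℓ6, hN⟩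
    exacts [.inr (.inr (.inl ⟨c, hN⟩)), .inr (.inr (.inr ⟨hℓ6, c, hN⟩))]
  · refine .inl fun i hi j hj _ hij => ?_
    rcases (hv i j).1 hij with rfl | rfl
    exacts [hpair ⟨i, hi, hj⟩, hpair ⟨j, hj, hi⟩]

/-- In a bull-free graph, for an induced cycle `v : ZMod ℓ → V` of length `ℓ ≥ 6`, the
neighborhood on the cycle of any outside vertex is stable, all of the cycle, three
consecutive vertices, or (only if `ℓ = 6`) three consecutive vertices plus the opposite
one. -/
theorem stmt8 {V : Type*} (G : SimpleGraph V) (hbull : _root_.Free G bull)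
    (ℓ : ℕ) (hℓ : 6 ≤ ℓ) (v : ZMod ℓ → V) (hinj : Function.Injective v)
    (hadj : ∀ i j, G.Adj (v i) (v j) ↔ (j = i + 1 ∨ i = j + 1)) :
    ∀ x, x ∉ Set.range v →
      ({i | G.Adj x (v i)} : Set (ZMod ℓ)).Pairwise (fun i j => ¬ G.Adj (v i) (v j)) ∨
      {i | G.Adj x (v i)} = (Set.univ : Set (ZMod ℓ)) ∨
      (∃ i : ZMod ℓ, {j | G.Adj x (v j)} = ({i - 1, i, i + 1} : Set (ZMod ℓ))) ∨
      (ℓ = 6 ∧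
        ∃ i : ZMod ℓ, {j | G.Adj x (v j)} = ({i - 1, i, i + 1, i + 3} : Set (ZMod ℓ))) :=
  stmt8_general G hbull ℓ hℓ v hadj
end

section
/- Let H be a hyperhole of odd length ℓ ≥ 5, i.e., V(H) is partitioned into cliques A_1,...,A_ℓ with A_i complete to A_{i−1} ∪ A_{i+1} (indices mod ℓ) and anticomplete to all other A_j. Then χ(H) = max( ω(H), ⌈ 2|V(H)| / (ℓ−1) ⌉ ). -/
open SimpleGraph

/-- A hyperhole of length `ℓ`: the vertex set is partitioned into nonempty cliques
`A i` (`i : ZMod ℓ`), with `A i` complete to `A (i+1)` and anticomplete to all other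
parts. -/
def IsHyperhole {V : Type*} (G : SimpleGraph V) {ℓ : ℕ} (A : ZMod ℓ → Set V) : Prop :=
  (∀ i, (A i).Nonempty) ∧
  (∀ i j, i ≠ j → Disjoint (A i) (A j)) ∧
  ((⋃ i, A i) = Set.univ) ∧
  (∀ i, G.IsClique (A i)) ∧
  (∀ i, ∀ x ∈ A i, ∀ y ∈ A (i + 1), G.Adj x y) ∧
  (∀ i j, i ≠ j → j ≠ i + 1 → i ≠ j + 1 → ∀ x ∈ A i, ∀ y ∈ A j, ¬ G.Adj x y)

/-!
Write `a i = |A i|`. A colour class meets each part in at most one vertex and never two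
consecutive parts, so it has at most `(ℓ - 1) / 2` vertices; with `ω ≤ χ` this gives the lower
bound. Conversely, `k` colours suffice as soon as `a i + a (i + 1) ≤ k` for all `i` and
`2 ∑ a i ≤ k (ℓ - 1)`. If some part is empty, the cycle becomes a path, whose parts alternately
take the lowest and the highest colours. Otherwise the sum bound forces an edge `(j, j + 1)` with
`a j + a (j + 1) < k`; the parts at even nonzero distance from `j` form a stable set `S` that
covers every other edge and has at least `(ℓ - 1) / 2` elements, so giving one colour to a
vertex of each part in `S` reduces both conditions from `k` to `k - 1`.
-/

open SimpleGraph Finset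

variable {ℓ : ℕ}

namespace ZMod

lemma val_add_one_sub_eq [NeZero ℓ] (i z : ZMod ℓ) :
    (i + 1 - z).val = (i - z).val + 1 ∨ (i + 1 - z).val = 0 ∧ (i - z).val + 1 = ℓ := by
  have hmod : (i + 1 - z).val = ((i - z).val + 1) % ℓ := by
    rw [show i + 1 - z = i - z + 1 by ring, val_add, val_one_eq_one_mod, Nat.add_mod_mod]
  have := (i - z).val_lt
  rcases Nat.lt_or_ge ((i - z).val + 1) ℓ with hlt | hge
  · exact Or.inl (by rw [hmod, Nat.mod_eq_of_lt hlt])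
  · have hsucc : (i - z).val + 1 = ℓ := by omega
    exact Or.inr ⟨by rw [hmod, hsucc, Nat.mod_self], hsucc⟩

lemma two_mul_card_le_of_forall_add_one_notMem [NeZero ℓ] {S : Finset (ZMod ℓ)}
    (hS : ∀ i ∈ S, i + 1 ∉ S) : 2 * #S ≤ ℓ := by
  have hdisj : Disjoint S (S.map (addRightEmbedding 1)) := by
    rw [Finset.disjoint_left]
    intro i hi hi'
    obtain ⟨j, hj, rfl⟩ := mem_map.1 hi'
    exact hS j hj hi
  calc 2 * #S = #(S ∪ S.map (addRightEmbedding 1)) := by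
        rw [card_union_of_disjoint hdisj, card_map]; ring
    _ ≤ ℓ := (card_le_univ _).trans (ZMod.card ℓ).le

lemma sub_one_le_two_mul_card_of_forall_ne [NeZero ℓ] {S : Finset (ZMod ℓ)} (j : ZMod ℓ)
    (hS : ∀ i ≠ j, i ∈ S ∨ i + 1 ∈ S) : ℓ - 1 ≤ 2 * #S := by
  have hsub : univ.erase j ⊆ S ∪ S.image (· - 1) := by
    intro i hi
    rcases hS i (ne_of_mem_erase hi) with h | h
    · exact mem_union_left _ h
    · exact mem_union_right _ (mem_image.2 ⟨i + 1, h, by ring⟩)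
  calc ℓ - 1 = #(univ.erase j) := by rw [card_erase_of_mem (mem_univ _), card_univ, ZMod.card]
    _ ≤ #S + #(S.image (· - 1)) := (card_le_card hsub).trans (card_union_le _ _)
    _ ≤ 2 * #S := by have := card_image_le (s := S) (f := (· - 1)); omega

lemma exists_stable_cover_of_odd [NeZero ℓ] (hodd : Odd ℓ) (j : ZMod ℓ) :
    ∃ S : Finset (ZMod ℓ), (∀ i ∈ S, i + 1 ∉ S) ∧ ∀ i ≠ j, i ∈ S ∨ i + 1 ∈ S := by
  obtain ⟨t, ht⟩ := hodd
  refine ⟨univ.filter fun i => (i - j).val % 2 = 0 ∧ (i - j).val ≠ 0, ?_, ?_⟩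
  · intro i hi hi1
    simp only [mem_filter, mem_univ, true_and] at hi hi1
    rcases val_add_one_sub_eq i j with h | h <;> omega
  · intro i hij
    have h0 : (i - j).val ≠ 0 := by rwa [val_ne_zero, sub_ne_zero]
    simp only [mem_filter, mem_univ, true_and]
    rcases val_add_one_sub_eq i j with h | h <;> omega

lemma exists_add_add_one_lt [NeZero ℓ] {a : ZMod ℓ → ℕ} {k : ℕ} (h : 2 * ∑ i, a i < k * ℓ) :
    ∃ j, a j + a (j + 1) < k := by
  by_contra! hk
  have hshift : ∑ i, a (i + 1) = ∑ i, a i := Fintype.sum_equiv (Equiv.addRight 1) _ _ fun _ => rfl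
  have : k * ℓ ≤ 2 * ∑ i, a i :=
    calc k * ℓ = ∑ _i : ZMod ℓ, k := by simp [ZMod.card, mul_comm]
      _ ≤ ∑ i, (a i + a (i + 1)) := sum_le_sum fun i _ => hk i
      _ = 2 * ∑ i, a i := by rw [sum_add_distrib, hshift]; ring
  omega

end ZMod

/-- A proper colouring, with colours `0, …, k - 1`, of a blow-up of the cycle `ZMod ℓ` whose
`i`-th part has `a i` vertices: that part receives the colour set `colors i`. -/
structure CycleBlowupColoring (ℓ k : ℕ) (a : ZMod ℓ → ℕ) where
  colors : ZMod ℓ → Finset ℕ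
  colors_subset : ∀ i, colors i ⊆ range k
  card_colors : ∀ i, #(colors i) = a i
  disjoint_colors : ∀ i, Disjoint (colors i) (colors (i + 1))

namespace CycleBlowupColoring

variable {k : ℕ} {a : ZMod ℓ → ℕ}

lemma nonempty_of_eq_zero [NeZero ℓ] (h : ∀ i, a i + a (i + 1) ≤ k) {z : ZMod ℓ}
    (hz : a z = 0) : Nonempty (CycleBlowupColoring ℓ k a) := by
  have hle : ∀ i, a i ≤ k := fun i => le_of_add_le_left (h i)
  have hdisj : ∀ {m n : ℕ}, m + n ≤ k → Disjoint (range m) (Ico (k - n) k) := by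
    intro m n hmn
    rw [Finset.disjoint_left]
    intro x hx hx'
    simp only [mem_range, mem_Ico] at hx hx'
    omega
  refine ⟨⟨fun i => if Even (i - z).val then range (a i) else Ico (k - a i) k, ?_, ?_, ?_⟩⟩
  · intro i
    split_ifs
    · exact range_subset_range.2 (hle i)
    · intro x hx
      simp only [mem_Ico, mem_range] at hx ⊢
      exact hx.2
  · intro i
    split_ifs
    · exact card_range _
    · rw [Nat.card_Ico]; have := hle i; omega
  · intro i
    rcases ZMod.val_add_one_sub_eq i z with hs | ⟨hs, -⟩
    · simp only [hs, Nat.even_add_one]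
      split_ifs
      · exact hdisj (h i)
      · exact (hdisj (by rw [add_comm]; exact h i)).symm
    · have hi : i + 1 = z := by rwa [ZMod.val_eq_zero, sub_eq_zero] at hs
      simp [hi, hz]

def extend (c : CycleBlowupColoring ℓ k a) (S : Finset (ZMod ℓ)) (hS : ∀ i ∈ S, i + 1 ∉ S) :
    CycleBlowupColoring ℓ (k + 1) fun i => a i + if i ∈ S then 1 else 0 where
  colors i := if i ∈ S then insert k (c.colors i) else c.colors i
  colors_subset i := by
    have := c.colors_subset i
    split_ifs
    · exact insert_subset (by simp) (this.trans (range_subset_range.2 k.le_succ))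
    · exact this.trans (range_subset_range.2 k.le_succ)
  card_colors i := by
    have hk : k ∉ c.colors i := fun h => by simpa using c.colors_subset i h
    split_ifs
    · rw [card_insert_of_notMem hk, c.card_colors]
    · rw [c.card_colors, add_zero]
  disjoint_colors i := by
    have hk : ∀ j, k ∉ c.colors j := fun j h => by simpa using c.colors_subset j h
    have := c.disjoint_colors i
    split_ifs with hi hi1 hi1
    · exact absurd hi1 (hS i hi)
    · exact disjoint_insert_left.2 ⟨hk _, this⟩
    · exact disjoint_insert_right.2 ⟨hk _, this⟩
    · exact this

theorem nonempty [NeZero ℓ] (hodd : Odd ℓ) (k : ℕ) (a : ZMod ℓ → ℕ)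
    (h₁ : ∀ i, a i + a (i + 1) ≤ k) (h₂ : 2 * ∑ i, a i ≤ k * (ℓ - 1)) :
    Nonempty (CycleBlowupColoring ℓ k a) := by
  induction k generalizing a with
  | zero => exact nonempty_of_eq_zero h₁ (z := 0) (by have := h₁ 0; omega)
  | succ k ih =>
    by_cases hz : ∃ z, a z = 0
    · obtain ⟨z, hz⟩ := hz
      exact nonempty_of_eq_zero h₁ hz
    push Not at hz
    have hℓ : k + 1 ≤ (k + 1) * ℓ := Nat.le_mul_of_pos_right _ hodd.pos
    obtain ⟨j, hj⟩ := ZMod.exists_add_add_one_lt (a := a) (k := k + 1)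
      (by rw [Nat.mul_sub_one] at h₂; omega)
    obtain ⟨S, hS, hcover⟩ := ZMod.exists_stable_cover_of_odd hodd j
    set a' : ZMod ℓ → ℕ := fun i => a i - if i ∈ S then 1 else 0 with ha'
    have ha : a = fun i => a' i + if i ∈ S then 1 else 0 := by
      funext i
      have := hz i
      simp only [ha']
      split_ifs <;> omega
    have h₁' : ∀ i, a' i + a' (i + 1) ≤ k := by
      intro i
      have := h₁ i
      simp only [ha']
      by_cases hi : i = j
      · subst hi; split_ifs <;> omega
      · rcases hcover i hi with hi | hi
        · have := hz i
          have hi1 := hS i hi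
          simp only [hi, hi1, if_true, if_false]
          omega
        · have := hz (i + 1)
          have : i ∉ S := fun h => hS i h hi
          simp only [hi, if_true, this, if_false]
          omega
    have hsum : ∑ i, a i = ∑ i, a' i + #S := by
      conv_lhs => rw [ha]
      rw [sum_add_distrib, sum_boole, Nat.cast_id, filter_mem_eq_inter, univ_inter]
    have h₂' : 2 * ∑ i, a' i ≤ k * (ℓ - 1) := by
      have := ZMod.sub_one_le_two_mul_card_of_forall_ne j hcover
      rw [add_one_mul] at h₂
      omega
    obtain ⟨c⟩ := ih a' h₁' h₂'
    rw [ha]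
    exact ⟨c.extend S hS⟩

end CycleBlowupColoring

lemma SimpleGraph.chromaticNumber_eq_of_forall_colorable_iff {V : Type*} {G : SimpleGraph V}
    {n : ℕ} (h : ∀ k, G.Colorable k ↔ n ≤ k) : G.chromaticNumber = n :=
  le_antisymm ((h n).2 le_rfl).chromaticNumber_le
    (le_chromaticNumber_iff_colorable.2 fun k hk => by exact_mod_cast (h k).1 hk)

namespace IsHyperhole

variable {V : Type*} {G : SimpleGraph V} {A : ZMod ℓ → Set V} (hA : IsHyperhole G A)
include hA

lemma exists_mem (v : V) : ∃ i, v ∈ A i :=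
  Set.mem_iUnion.1 (hA.2.2.1 ▸ Set.mem_univ v)

noncomputable def part (v : V) : ZMod ℓ := (hA.exists_mem v).choose

lemma mem_part (v : V) : v ∈ A (hA.part v) := (hA.exists_mem v).choose_spec

lemma add_one_ne (i : ZMod ℓ) : i + 1 ≠ i := by
  intro h
  obtain ⟨x, hx⟩ := hA.1 i
  exact G.irrefl (hA.2.2.2.2.1 i x hx x (h.symm ▸ hx))

lemma ne_one : ℓ ≠ 1 := by
  rintro rfl
  exact hA.add_one_ne 0 (Subsingleton.elim _ _)

lemma adj_of_part_eq {v w : V} (hne : v ≠ w) (h : hA.part v = hA.part w) : G.Adj v w :=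
  hA.2.2.2.1 _ (hA.mem_part v) (h ▸ hA.mem_part w) hne

lemma adj_of_part_eq_add_one {v w : V} (h : hA.part w = hA.part v + 1) : G.Adj v w :=
  hA.2.2.2.2.1 _ v (hA.mem_part v) w (h ▸ hA.mem_part w)

lemma part_eq_or_of_adj {v w : V} (h : G.Adj v w) :
    hA.part v = hA.part w ∨ hA.part w = hA.part v + 1 ∨ hA.part v = hA.part w + 1 := by
  by_contra! hne
  exact hA.2.2.2.2.2 _ _ hne.1 hne.2.1 hne.2.2 v (hA.mem_part v) w (hA.mem_part w) h

lemma two_mul_card_le_of_isIndepSet [NeZero ℓ] {s : Finset V} (hs : G.IsIndepSet s) :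
    2 * #s ≤ ℓ := by
  classical
  have hinj : Set.InjOn hA.part s := fun v hv w hw h => by
    by_contra hne
    exact hs hv hw hne (hA.adj_of_part_eq hne h)
  rw [← card_image_of_injOn hinj]
  refine ZMod.two_mul_card_le_of_forall_add_one_notMem ?_
  intro i hi hi1
  obtain ⟨v, hv, rfl⟩ := mem_image.1 hi
  obtain ⟨w, hw, hvw⟩ := mem_image.1 hi1
  have hadj := hA.adj_of_part_eq_add_one hvw
  exact hs hv hw hadj.ne hadj

variable [Fintype V]

lemma sum_card_part [NeZero ℓ] : ∑ i, #{v | hA.part v = i} = Fintype.card V :=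
  (card_eq_sum_card_fiberwise fun v _ => mem_univ (hA.part v)).symm

lemma card_part_add_card_part_add_one_le_cliqueNum (i : ZMod ℓ) :
    #{v | hA.part v = i} + #{v | hA.part v = i + 1} ≤ G.cliqueNum := by
  classical
  rw [← card_union_of_disjoint]
  · apply IsClique.card_le_cliqueNum
    intro v hv w hw hne
    simp only [coe_union, coe_filter, mem_univ, true_and, Set.mem_union, Set.mem_ofPred_eq] at hv hw
    rcases hv with hv | hv <;> rcases hw with hw | hw
    · exact hA.adj_of_part_eq hne (hv.trans hw.symm)
    · exact hA.adj_of_part_eq_add_one (by rw [hv, hw])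
    · exact (hA.adj_of_part_eq_add_one (by rw [hv, hw])).symm
    · exact hA.adj_of_part_eq hne (hv.trans hw.symm)
  · exact disjoint_filter.2 fun v _ hv hv1 => hA.add_one_ne i (hv1.symm.trans hv)

lemma two_mul_card_le_of_colorable (hodd : Odd ℓ) {k : ℕ} (h : G.Colorable k) :
    2 * Fintype.card V ≤ k * (ℓ - 1) := by
  have : NeZero ℓ := ⟨hodd.pos.ne'⟩
  obtain ⟨C⟩ := h
  obtain ⟨t, ht⟩ := hodd
  have hclass : ∀ b, 2 * #{v | C v = b} ≤ ℓ - 1 := by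
    intro b
    have := hA.two_mul_card_le_of_isIndepSet (s := {v | C v = b}) fun v hv w hw _ hadj => by
      simp only [coe_filter, mem_univ, true_and, Set.mem_ofPred_eq] at hv hw
      exact C.valid hadj (hv.trans hw.symm)
    omega
  calc 2 * Fintype.card V = ∑ b, 2 * #{v | C v = b} := by
        rw [← mul_sum, ← card_univ, card_eq_sum_card_fiberwise fun v _ => mem_univ (C v)]
    _ ≤ ∑ _b : Fin k, (ℓ - 1) := sum_le_sum fun b _ => hclass b
    _ = k * (ℓ - 1) := by simp

lemma colorable_of_cycleBlowupColoring {k : ℕ}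
    (c : CycleBlowupColoring ℓ k fun i => #{v | hA.part v = i}) : G.Colorable k := by
  have hbij : ∀ i, ∃ f : V → ℕ, Set.BijOn f ({v | hA.part v = i} : Finset V) (c.colors i) :=
    fun i => (finite_toSet _).exists_bijOn_of_encard_eq
      (by simp only [Set.encard_coe_eq_coe_finsetCard, c.card_colors])
  choose f hf using hbij
  have hcol : ∀ v, f (hA.part v) v ∈ c.colors (hA.part v) := fun v => (hf _).mapsTo (by simp)
  refine ⟨Coloring.mk (fun v => ⟨f (hA.part v) v, mem_range.1 (c.colors_subset _ (hcol v))⟩) ?_⟩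
  intro v w hvw heq
  have heq : f (hA.part v) v = f (hA.part w) w := congrArg Fin.val heq
  rcases hA.part_eq_or_of_adj hvw with h | h | h
  · rw [← h] at heq
    exact hvw.ne ((hf _).injOn (by simp) (by simp [h]) heq)
  · have := hcol w
    rw [← heq, h] at this
    exact Finset.disjoint_left.1 (c.disjoint_colors _) (hcol v) this
  · have := hcol v
    rw [heq, h] at this
    exact Finset.disjoint_left.1 (c.disjoint_colors _) (hcol w) this

theorem colorable_iff (hodd : Odd ℓ) {k : ℕ} :
    G.Colorable k ↔ G.cliqueNum ≤ k ∧ 2 * Fintype.card V ≤ k * (ℓ - 1) := by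
  have : NeZero ℓ := ⟨hodd.pos.ne'⟩
  refine ⟨fun h => ⟨?_, hA.two_mul_card_le_of_colorable hodd h⟩, fun ⟨hω, hN⟩ => ?_⟩
  · exact_mod_cast G.cliqueNum_le_chromaticNumber.trans h.chromaticNumber_le
  · obtain ⟨c⟩ := CycleBlowupColoring.nonempty hodd k _
      (fun i => (hA.card_part_add_card_part_add_one_le_cliqueNum i).trans hω)
      (by rwa [hA.sum_card_part])
    exact hA.colorable_of_cycleBlowupColoring c

end IsHyperhole

theorem stmt11_general {V : Type*} [Fintype V] (G : SimpleGraph V)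
    (ℓ : ℕ) (hodd : Odd ℓ)
    (A : ZMod ℓ → Set V) (hA : IsHyperhole G A) :
    G.chromaticNumber =
      ((max G.cliqueNum ((2 * Fintype.card V + ℓ - 2) / (ℓ - 1)) : ℕ) : ℕ∞) := by
  have hℓ : 2 ≤ ℓ := by have := hA.ne_one; have := hodd.pos; omega
  have hceil : (2 * Fintype.card V + ℓ - 2) / (ℓ - 1) = 2 * Fintype.card V ⌈/⌉ (ℓ - 1) := by
    rw [Nat.ceilDiv_eq_add_pred_div]
    congr 1
    omega
  refine chromaticNumber_eq_of_forall_colorable_iff fun k => ?_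
  rw [hA.colorable_iff hodd, hceil, max_le_iff, ceilDiv_le_iff_le_mul (by omega), mul_comm (ℓ - 1)]

/-- The chromatic number of a hyperhole of odd length `ℓ ≥ 5` is
`max(ω(H), ⌈2|V(H)|/(ℓ-1)⌉)` (the ceiling is expressed via natural division). -/
theorem stmt11 {V : Type*} [Fintype V] (G : SimpleGraph V)
    (ℓ : ℕ) (hℓ : 5 ≤ ℓ) (hodd : Odd ℓ)
    (A : ZMod ℓ → Set V) (hA : IsHyperhole G A) :
    G.chromaticNumber =
      ((max G.cliqueNum ((2 * Fintype.card V + ℓ - 2) / (ℓ - 1)) : ℕ) : ℕ∞) :=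
  stmt11_general G ℓ hodd A hA
end

section
/- Let G be a prime (fork, bull)-free graph containing an induced 6-cycle v_1...v_6 such that some vertex outside is adjacent to exactly {v_1,v_3,v_5}. Let S_{135} (resp. S_{246}) be the set of vertices outside the cycle adjacent to exactly {v_1,v_3,v_5} (resp. {v_2,v_4,v_6}). Then S_{135} and S_{246} are stable sets. -/
open SimpleGraph

/-! Let `S` be the set of vertices off the cycle seeing exactly `c 0, c 2, c 4`. If `a, b ∈ S` are
adjacent and `z` sees `a` but not `b`, then `z ∈ S`: every other neighbourhood of `z` on the cycle
yields an induced fork built from `a`, `b`, `z` and a few cycle vertices. Hence the vertex set of a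
component of `G[S]` is a homogeneous set, and primality forces every such component to be a single
vertex. Rotating the cycle by one step turns the `{1, 3, 5}` case into the `{0, 2, 4}` case. -/

section

variable {V : Type*} {G : SimpleGraph V}

theorem Free.not_fork (hf : _root_.Free G fork) {u v w x e : V}
    (huv : G.Adj u v) (hvw : G.Adj v w) (hwx : G.Adj w x) (hve : G.Adj v e)
    (huw : ¬ G.Adj u w) (hux : ¬ G.Adj u x) (hue : ¬ G.Adj u e)
    (hvx : ¬ G.Adj v x) (hwe : ¬ G.Adj w e) (hxe : ¬ G.Adj x e) (hne : u ≠ e) : False := by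
  have hinj : Function.Injective ![u, v, w, x, e] := by
    intro i j h
    fin_cases i <;> fin_cases j <;> simp_all [G.adj_comm]
  refine hf ⟨⟨⟨_, hinj⟩, fun {i j} => ?_⟩⟩
  fin_cases i <;> fin_cases j <;> simp_all [fork, G.adj_comm]

theorem IsPrime.isIndepSet_of_distinguisher_mem (hG : IsPrime G) {S : Set V}
    (hS : S ≠ Set.univ)
    (hclosed : ∀ a ∈ S, ∀ b ∈ S, G.Adj a b → ∀ z, G.Adj z a → ¬ G.Adj z b → z ∈ S) :
    G.IsIndepSet S := by
  intro x hx y hy hne hxy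
  set M : Set V := {v | Relation.ReflTransGen (fun u w => G.Adj u w ∧ w ∈ S) x v}
  have hMS : M ⊆ S := fun v hv => by
    induction hv with
    | refl => exact hx
    | tail _ h _ => exact h.2
  have hhom : IsHomogeneousSet G M := by
    intro v hv
    have hconst : ∀ w ∈ M, G.Adj v w ↔ G.Adj v x := by
      intro w hw
      induction hw with
      | refl => rfl
      | @tail u w hu huw ih =>
        rw [← ih]
        constructor
        · refine fun hvw => by_contra fun hvu => hv ?_
          exact (hu.tail huw).tail ⟨hvw.symm, hclosed w huw.2 u (hMS hu) huw.1.symm v hvw hvu⟩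
        · refine fun hvu => by_contra fun hvw => hv ?_
          exact hu.tail ⟨hvu.symm, hclosed u (hMS hu) w huw.2 huw.1 v hvu hvw⟩
    by_cases hvx : G.Adj v x
    · exact Or.inl fun w hw => (hconst w hw).2 hvx
    · exact Or.inr fun w hw h => hvx ((hconst w hw).1 h)
  have hxM : x ∈ M := Relation.ReflTransGen.refl
  have hyM : y ∈ M := Relation.ReflTransGen.single ⟨hxy, hy⟩
  rcases hG M hhom with hM | ⟨w, hM⟩ | hM
  · simp [hM] at hxM
  · rw [hM] at hxM hyM
    exact hne (hxM.trans hyM.symm)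
  · exact hS (Set.eq_univ_of_univ_subset (hM ▸ hMS))

theorem cycleGraph_adj_add_one {n : ℕ} (i : Fin (n + 2)) : (cycleGraph (n + 2)).Adj i (i + 1) :=
  cycleGraph_adj.2 (Or.inr (add_sub_cancel_left i 1))

theorem cycleGraph_adj_sub_one {n : ℕ} (i : Fin (n + 2)) : (cycleGraph (n + 2)).Adj i (i - 1) :=
  cycleGraph_adj.2 (Or.inl (sub_sub_cancel i 1))

def cycleGraphRotate (n : ℕ) : cycleGraph (n + 2) ≃g cycleGraph (n + 2) :=
  ⟨Equiv.addRight 1, by simp [cycleGraph_adj]⟩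

abbrev evenIndices : Set (Fin 6) := {0, 2, 4}

theorem add_one_mem_evenIndices_iff {k : Fin 6} : k + 1 ∈ evenIndices ↔ k ∉ evenIndices := by
  revert k; decide

theorem sub_one_mem_evenIndices_iff {k : Fin 6} : k - 1 ∈ evenIndices ↔ k ∉ evenIndices := by
  revert k; decide

theorem add_three_mem_evenIndices_iff {k : Fin 6} : k + 3 ∈ evenIndices ↔ k ∉ evenIndices := by
  revert k; decide

theorem cycleGraph_six_not_adj_of_notMem_evenIndices {i j : Fin 6} (hi : i ∉ evenIndices)
    (hj : j ∉ evenIndices) : ¬ (cycleGraph 6).Adj i j := by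
  revert i j; decide

theorem cycleGraph_six_not_adj_add_three (i : Fin 6) : ¬ (cycleGraph 6).Adj i (i + 3) := by
  revert i; decide

/-- The paper's `S₁₃₅` for the cycle `v₁ … v₆ = c 0 … c 5`. -/
def SeesExactlyEvens (c : cycleGraph 6 ↪g G) (x : V) : Prop :=
  x ∉ Set.range c ∧ {i | G.Adj x (c i)} = evenIndices

section ForkFree

variable {c : cycleGraph 6 ↪g G} {a b z : V}

theorem SeesExactlyEvens.adj_iff (ha : SeesExactlyEvens c a) (i : Fin 6) :
    G.Adj a (c i) ↔ i ∈ evenIndices :=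
  Set.ext_iff.mp ha.2 i

theorem SeesExactlyEvens.not_adj_of_notMem (ha : SeesExactlyEvens c a) {i : Fin 6}
    (hi : i ∉ evenIndices) : ¬ G.Adj (c i) a :=
  fun h => hi ((ha.adj_iff i).1 h.symm)

variable (hf : _root_.Free G fork) (ha : SeesExactlyEvens c a) (hb : SeesExactlyEvens c b)
include hf

-- fork `c i - z - a - b` with pendant `c j` at `z`
include ha hb in
theorem eq_of_adj_notMem_evenIndices (hab : G.Adj a b) (hza : G.Adj z a) (hzb : ¬ G.Adj z b)
    {i j : Fin 6} (hi : i ∉ evenIndices) (hj : j ∉ evenIndices)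
    (hzi : G.Adj z (c i)) (hzj : G.Adj z (c j)) : i = j :=
  by_contra fun hij => hf.not_fork hzi.symm hza hab hzj (ha.not_adj_of_notMem hi)
    (hb.not_adj_of_notMem hi)
    (fun h => cycleGraph_six_not_adj_of_notMem_evenIndices hi hj (c.map_rel_iff.1 h)) hzb
    (fun h => ha.not_adj_of_notMem hj h.symm) (fun h => hb.not_adj_of_notMem hj h.symm)
    (c.injective.ne hij)

-- fork `c (k + 1) - c k - a - z` with pendant `c (k - 1)` at `c k`
include ha in
theorem adj_of_not_adj_add_one_of_not_adj_sub_one (hza : G.Adj z a) {k : Fin 6}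
    (hk : k ∈ evenIndices) (h₁ : ¬ G.Adj z (c (k + 1))) (h₂ : ¬ G.Adj z (c (k - 1))) :
    G.Adj z (c k) := by
  have hk₁ : k + 1 ∉ evenIndices := fun h => add_one_mem_evenIndices_iff.1 h hk
  have hk₂ : k - 1 ∉ evenIndices := fun h => sub_one_mem_evenIndices_iff.1 h hk
  by_contra h₀
  exact hf.not_fork (c.map_rel_iff.2 (cycleGraph_adj_add_one k).symm) ((ha.adj_iff k).2 hk).symm
    hza.symm (c.map_rel_iff.2 (cycleGraph_adj_sub_one k)) (ha.not_adj_of_notMem hk₁)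
    (fun h => h₁ h.symm)
    (fun h => cycleGraph_six_not_adj_of_notMem_evenIndices hk₁ hk₂ (c.map_rel_iff.1 h))
    (fun h => h₀ h.symm) (fun h => ha.not_adj_of_notMem hk₂ h.symm) h₂
    (c.injective.ne (by simp [sub_eq_add_neg]; decide))

-- fork `b - c k - z - c (k + 3)` with pendant `c (k + 1)` at `c k`
include hb in
theorem not_adj_add_three_of_adj_of_not_adj_add_one (hzb : ¬ G.Adj z b) {k : Fin 6}
    (hk : k ∈ evenIndices) (h₀ : G.Adj z (c k)) (h₁ : ¬ G.Adj z (c (k + 1))) :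
    ¬ G.Adj z (c (k + 3)) := by
  have hk₁ : k + 1 ∉ evenIndices := fun h => add_one_mem_evenIndices_iff.1 h hk
  have hk₃ : k + 3 ∉ evenIndices := fun h => add_three_mem_evenIndices_iff.1 h hk
  intro h₃
  exact hf.not_fork ((hb.adj_iff k).2 hk) h₀.symm h₃ (c.map_rel_iff.2 (cycleGraph_adj_add_one k))
    (fun h => hzb h.symm) (fun h => hb.not_adj_of_notMem hk₃ h.symm)
    (fun h => hb.not_adj_of_notMem hk₁ h.symm)
    (fun h => cycleGraph_six_not_adj_add_three k (c.map_rel_iff.1 h)) h₁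
    (fun h => cycleGraph_six_not_adj_of_notMem_evenIndices hk₃ hk₁ (c.map_rel_iff.1 h))
    (fun h => hb.1 ⟨k + 1, h.symm⟩)

include ha hb in
theorem SeesExactlyEvens.of_adj_of_not_adj (hab : G.Adj a b) (hza : G.Adj z a)
    (hzb : ¬ G.Adj z b) : SeesExactlyEvens c z := by
  have hopp : ∀ k ∈ evenIndices, ¬ G.Adj z (c (k + 3)) := by
    intro k hk h₃
    have hk₃ : k + 3 ∉ evenIndices := fun h => add_three_mem_evenIndices_iff.1 h hk
    have h₁ : ¬ G.Adj z (c (k + 1)) := fun h => by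
      have := eq_of_adj_notMem_evenIndices hf ha hb hab hza hzb hk₃
        (fun h => add_one_mem_evenIndices_iff.1 h hk) h₃ h
      simp at this
    have h₂ : ¬ G.Adj z (c (k - 1)) := fun h => by
      have := eq_of_adj_notMem_evenIndices hf ha hb hab hza hzb hk₃
        (fun h => sub_one_mem_evenIndices_iff.1 h hk) h₃ h
      simp [sub_eq_add_neg] at this
      exact absurd this (by decide)
    exact not_adj_add_three_of_adj_of_not_adj_add_one hf hb hzb hk
      (adj_of_not_adj_add_one_of_not_adj_sub_one hf ha hza hk h₁ h₂) h₁ h₃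
  have hodd : ∀ j ∉ evenIndices, ¬ G.Adj z (c j) := fun j hj => by
    simpa [add_assoc] using hopp (j + 3) (add_three_mem_evenIndices_iff.2 hj)
  refine ⟨?_, Set.ext fun k => ⟨fun hzk => by_contra fun hk => hodd k hk hzk, fun hk =>
    adj_of_not_adj_add_one_of_not_adj_sub_one hf ha hza hk
      (hodd _ fun h => add_one_mem_evenIndices_iff.1 h hk)
      (hodd _ fun h => sub_one_mem_evenIndices_iff.1 h hk)⟩⟩
  rintro ⟨i, rfl⟩
  by_cases hi : i ∈ evenIndices
  · exact hzb ((hb.adj_iff i).2 hi).symm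
  · exact ha.not_adj_of_notMem hi hza

end ForkFree

theorem IsPrime.isIndepSet_seesExactlyEvens (hG : IsPrime G) (hf : _root_.Free G fork)
    (c : cycleGraph 6 ↪g G) : G.IsIndepSet {x | SeesExactlyEvens c x} := by
  refine hG.isIndepSet_of_distinguisher_mem (fun h => ?_)
    fun a ha b hb hab z hza hzb => SeesExactlyEvens.of_adj_of_not_adj hf ha hb hab hza hzb
  have hc₀ : c 0 ∈ {x | SeesExactlyEvens c x} := h ▸ Set.mem_univ (c 0)
  exact hc₀.1 ⟨0, rfl⟩

theorem seesExactlyEvens_comp_rotate {c : cycleGraph 6 ↪g G} {x : V} (hx : x ∉ Set.range c)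
    (hodd : {i | G.Adj x (c i)} = ({1, 3, 5} : Set (Fin 6))) :
    SeesExactlyEvens (c.comp (cycleGraphRotate 4).toEmbedding) x := by
  refine ⟨fun ⟨i, hi⟩ => hx ⟨i + 1, hi⟩, Set.ext fun i => (Set.ext_iff.mp hodd (i + 1)).trans ?_⟩
  revert i; decide

end

theorem stmt18_general {V : Type*} (G : SimpleGraph V)
    (hprime : IsPrime G) (hfork : _root_.Free G fork)
    (c : cycleGraph 6 ↪g G) :
    (∀ x y, x ∉ Set.range c → {i | G.Adj x (c i)} = ({0, 2, 4} : Set (Fin 6)) →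
      y ∉ Set.range c → {i | G.Adj y (c i)} = ({0, 2, 4} : Set (Fin 6)) →
      ¬ G.Adj x y) ∧
    (∀ x y, x ∉ Set.range c → {i | G.Adj x (c i)} = ({1, 3, 5} : Set (Fin 6)) →
      y ∉ Set.range c → {i | G.Adj y (c i)} = ({1, 3, 5} : Set (Fin 6)) →
      ¬ G.Adj x y) := by
  refine ⟨fun x y hx hxE hy hyE hxy => ?_, fun x y hx hxO hy hyO hxy => ?_⟩
  · exact hprime.isIndepSet_seesExactlyEvens hfork c ⟨hx, hxE⟩ ⟨hy, hyE⟩ hxy.ne hxy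
  · exact hprime.isIndepSet_seesExactlyEvens hfork _ (seesExactlyEvens_comp_rotate hx hxO)
      (seesExactlyEvens_comp_rotate hy hyO) hxy.ne hxy

/-- In a prime (fork, bull)-free graph with an induced 6-cycle `c` having an outside
vertex adjacent exactly to the alternate vertices `c 0, c 2, c 4`, the sets `S₁₃₅` and
`S₂₄₆` of outside vertices seeing exactly `{c 0, c 2, c 4}` (resp. `{c 1, c 3, c 5}`)
are stable. -/
theorem stmt18 {V : Type*} [Fintype V] (G : SimpleGraph V)
    (hprime : IsPrime G) (hfork : _root_.Free G fork) (hbull : _root_.Free G bull)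
    (c : cycleGraph 6 ↪g G)
    (hex : ∃ x, x ∉ Set.range c ∧
      {i | G.Adj x (c i)} = ({0, 2, 4} : Set (Fin 6))) :
    (∀ x y, x ∉ Set.range c → {i | G.Adj x (c i)} = ({0, 2, 4} : Set (Fin 6)) →
      y ∉ Set.range c → {i | G.Adj y (c i)} = ({0, 2, 4} : Set (Fin 6)) →
      ¬ G.Adj x y) ∧
    (∀ x y, x ∉ Set.range c → {i | G.Adj x (c i)} = ({1, 3, 5} : Set (Fin 6)) →
      y ∉ Set.range c → {i | G.Adj y (c i)} = ({1, 3, 5} : Set (Fin 6)) →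
      ¬ G.Adj x y) :=
  stmt18_general G hprime hfork c
end

section
/- The chromatic number of a cycle C_ℓ with positive integer vertex weights w_1,...,w_ℓ, ℓ odd, ℓ ≥ 5, in the weighted coloring sense (find the minimum number k of stable sets such that vertex i belongs to at least w_i of them) equals max( max_i (w_i + w_{i+1}), ⌈ 2(w_1+...+w_ℓ)/(ℓ−1) ⌉ ), where indices are mod ℓ. -/
open SimpleGraph

/-!
A stable set of the cycle `C_ℓ`, `ℓ = 2m+1`, has at most `m` vertices, and adjacent vertices share
no colour, so `k` colours force `w i + w (i+1) ≤ k` and `∑ w ≤ k m`. Conversely, for such `k` walk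
around `ZMod k`, giving vertex `i` an arc of `w i` consecutive colours followed by a gap
`t i ≤ k - w i - w (i+1)`. The total slack `∑ (k - w i - w (i+1)) = ℓ k - 2 ∑ w` is at least
`k m - ∑ w`, so the gaps can be chosen to sum to exactly that; the walk then closes up after `m`
full turns, and the last arc is disjoint from the first as well.
-/

open Finset

theorem Finset.exists_le_sum_eq {ι : Type*} [DecidableEq ι] (s : Finset ι) (c : ι → ℕ)
    {T : ℕ} (hT : T ≤ ∑ i ∈ s, c i) :
    ∃ t : ι → ℕ, (∀ i, t i ≤ c i) ∧ ∑ i ∈ s, t i = T := by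
  induction s using Finset.induction_on generalizing T with
  | empty => exact ⟨0, fun _ => Nat.zero_le _, by simp_all⟩
  | insert a s ha ih =>
    rw [sum_insert ha] at hT
    obtain ⟨t, htc, hts⟩ := ih (T := T - min (c a) T) (by omega)
    refine ⟨Function.update t a (min (c a) T), fun i => ?_, ?_⟩
    · rcases eq_or_ne i a with rfl | hi
      · simp
      · simpa [hi] using htc i
    · rw [sum_insert ha, Function.update_self, sum_congr rfl fun i hi =>
        Function.update_of_ne (ne_of_mem_of_not_mem hi ha) _ _, hts]
      omega

namespace ZMod

theorem sum_univ_eq_sum_range {n : ℕ} [NeZero n] {M : Type*} [AddCommMonoid M]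
    (f : ZMod n → M) : ∑ i, f i = ∑ j ∈ range n, f j :=
  sum_nbij' val (↑) (fun a _ => mem_range.2 a.val_lt) (fun _ _ => mem_univ _)
    (fun a _ => natCast_zmod_val a) (fun _ ha => val_natCast_of_lt (mem_range.1 ha))
    (fun a _ => by rw [natCast_zmod_val])

variable {K : ℕ}

theorem natCast_injOn_Iio : Set.InjOn (Nat.cast : ℕ → ZMod K) (Set.Iio K) := by
  intro x hx y hy h
  simpa [natCast_eq_natCast_iff', Nat.mod_eq_of_lt hx, Nat.mod_eq_of_lt hy] using h

def arc (a : ZMod K) (n : ℕ) : Finset (ZMod K) := (range n).image fun r : ℕ => a + r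

theorem card_arc (a : ZMod K) {n : ℕ} (hn : n ≤ K) : #(arc a n) = n := by
  rw [arc, card_image_of_injOn, card_range]
  intro x hx y hy h
  exact natCast_injOn_Iio ((mem_range.1 hx).trans_le hn) ((mem_range.1 hy).trans_le hn)
    (add_left_cancel h)

theorem disjoint_arc (a : ZMod K) {n g n' : ℕ} (h : n + g + n' ≤ K) :
    Disjoint (arc a n) (arc (a + (n + g : ℕ)) n') := by
  simp only [arc, Finset.disjoint_left, mem_image, mem_range]
  rintro _ ⟨r, hr, rfl⟩ ⟨r', hr', heq⟩
  rw [add_assoc, add_right_inj, ← Nat.cast_add] at heq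
  have := natCast_injOn_Iio (Set.mem_Iio.2 (by omega)) (Set.mem_Iio.2 (by omega)) heq
  omega

end ZMod

variable {ℓ : ℕ}

def IsCycleStable (S : Finset (ZMod ℓ)) : Prop :=
  ∀ a ∈ S, ∀ b ∈ S, ¬ (a = b + 1 ∨ b = a + 1)

def IsWeightedColoring (w : ZMod ℓ → ℕ) {k : ℕ} (S : Fin k → Finset (ZMod ℓ)) : Prop :=
  (∀ j, IsCycleStable (S j)) ∧ ∀ i, w i ≤ #{j | i ∈ S j}

theorem IsWeightedColoring.add_le {w : ZMod ℓ → ℕ} {k : ℕ} {S : Fin k → Finset (ZMod ℓ)}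
    (hS : IsWeightedColoring w S) (i : ZMod ℓ) : w i + w (i + 1) ≤ k := by
  have hdisj : Disjoint ({j | i ∈ S j} : Finset (Fin k)) ({j | i + 1 ∈ S j} : Finset _) :=
    disjoint_filter.2 fun j _ hi hi' => hS.1 j _ hi _ hi' (Or.inr rfl)
  calc w i + w (i + 1) ≤ #{j | i ∈ S j} + #{j | i + 1 ∈ S j} := add_le_add (hS.2 i) (hS.2 _)
    _ = #(({j | i ∈ S j} : Finset (Fin k)) ∪ ({j | i + 1 ∈ S j} : Finset _)) :=
        (card_union_of_disjoint hdisj).symm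
    _ ≤ k := (card_le_univ _).trans_eq (Fintype.card_fin k)

variable [NeZero ℓ]

theorem IsCycleStable.two_mul_card_le {S : Finset (ZMod ℓ)} (hS : IsCycleStable S) :
    2 * #S ≤ ℓ := by
  have hdisj : Disjoint S (S.map (addRightEmbedding 1)) := by
    rw [Finset.disjoint_left]
    rintro b hb hb'
    obtain ⟨a, ha, rfl⟩ := mem_map.1 hb'
    exact hS _ hb a ha (Or.inl rfl)
  calc 2 * #S = #(S ∪ S.map (addRightEmbedding 1)) := by
        rw [card_union_of_disjoint hdisj, card_map, two_mul]
    _ ≤ ℓ := (card_le_univ _).trans (ZMod.card ℓ).le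

theorem IsWeightedColoring.two_mul_sum_le {w : ZMod ℓ → ℕ} {k : ℕ}
    {S : Fin k → Finset (ZMod ℓ)} (hS : IsWeightedColoring w S) (hodd : Odd ℓ) :
    2 * ∑ i, w i ≤ (ℓ - 1) * k := by
  have hcard : ∀ j, 2 * #(S j) ≤ ℓ - 1 := fun j => by
    have := (hS.1 j).two_mul_card_le
    obtain ⟨m, rfl⟩ := hodd
    omega
  calc 2 * ∑ i, w i ≤ 2 * ∑ i, #{j | i ∈ S j} := by gcongr with i; exact hS.2 i
    _ = 2 * ∑ j, #(S j) := by
        congr 1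
        simpa [bipartiteAbove, bipartiteBelow] using
          sum_card_bipartiteAbove_eq_sum_card_bipartiteBelow (s := univ) (t := univ)
            (fun i j => i ∈ S j)
    _ ≤ (ℓ - 1) * k := by
        rw [mul_sum]
        simpa [mul_comm] using sum_le_sum fun j (_ : j ∈ univ) => hcard j

theorem exists_isWeightedColoring_of_disjoint_succ {w : ZMod ℓ → ℕ} {α : Type*}
    [Fintype α] [DecidableEq α] {k : ℕ} (hα : Fintype.card α = k) (A : ZMod ℓ → Finset α)
    (hA : ∀ i, Disjoint (A i) (A (i + 1))) (hw : ∀ i, w i ≤ #(A i)) :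
    ∃ S : Fin k → Finset (ZMod ℓ), IsWeightedColoring w S := by
  let e := Fintype.equivFinOfCardEq hα
  refine ⟨fun j => {i | e.symm j ∈ A i}, fun j a ha b hb hab => ?_, fun i => ?_⟩
  · simp only [mem_filter, mem_univ, true_and] at ha hb
    rcases hab with rfl | rfl
    exacts [Finset.disjoint_left.1 (hA b) hb ha, Finset.disjoint_left.1 (hA a) ha hb]
  · have : ({j | i ∈ ({i | e.symm j ∈ A i} : Finset _)} : Finset _) =
        (A i).map e.toEmbedding := by
      ext j
      simp [mem_map_equiv]
    rw [this, card_map]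
    exact hw i

def cyclicPosition (K : ℕ) (g : ZMod ℓ → ℕ) (i : ZMod ℓ) : ZMod K :=
  ((∑ j ∈ range i.val, g j : ℕ) : ZMod K)

theorem cyclicPosition_add_one {K : ℕ} {g : ZMod ℓ → ℕ} (hg : K ∣ ∑ i, g i) (i : ZMod ℓ) :
    cyclicPosition K g (i + 1) = cyclicPosition K g i + g i := by
  have hsucc :
      cyclicPosition K g i + g i = ((∑ j ∈ range (i.val + 1), g j : ℕ) : ZMod K) := by
    rw [sum_range_succ, ZMod.natCast_zmod_val, Nat.cast_add, cyclicPosition]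
  have hi : (i + 1 : ZMod ℓ) = ((i.val + 1 : ℕ) : ZMod ℓ) := by
    push_cast [ZMod.natCast_zmod_val]; rfl
  rw [hsucc]
  rcases (show i.val + 1 ≤ ℓ from i.val_lt).lt_or_eq with hlt | heq
  · rw [cyclicPosition, hi, ZMod.val_natCast_of_lt hlt]
  · rw [heq, ← ZMod.sum_univ_eq_sum_range, (ZMod.natCast_eq_zero_iff _ _).2 hg, hi, heq,
      ZMod.natCast_self, cyclicPosition, ZMod.val_zero, sum_range_zero, Nat.cast_zero]

theorem exists_disjoint_succ_of_two_mul_sum_le (hodd : Odd ℓ) {w : ZMod ℓ → ℕ} {K : ℕ}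
    (hadj : ∀ i, w i + w (i + 1) ≤ K) (hsum : 2 * ∑ i, w i ≤ (ℓ - 1) * K) :
    ∃ A : ZMod ℓ → Finset (ZMod K),
      (∀ i, Disjoint (A i) (A (i + 1))) ∧ ∀ i, #(A i) = w i := by
  obtain ⟨m, hm⟩ := hodd
  set W := ∑ i, w i
  have hW : W ≤ K * m := by
    rw [hm, Nat.add_sub_cancel, mul_assoc, mul_comm m K] at hsum
    omega
  have hcap : ∑ i, (K - (w i + w (i + 1))) + 2 * W = 2 * (K * m) + K := by
    have hshift : ∑ i, w (i + 1) = W := Fintype.sum_equiv (Equiv.addRight 1) _ _ fun _ => rfl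
    calc ∑ i, (K - (w i + w (i + 1))) + 2 * W
        = ∑ i, (K - (w i + w (i + 1)) + (w i + w (i + 1))) := by
          rw [sum_add_distrib, sum_add_distrib, hshift]; ring
      _ = ∑ _i : ZMod ℓ, K := sum_congr rfl fun i _ => Nat.sub_add_cancel (hadj i)
      _ = 2 * (K * m) + K := by
          simp only [sum_const, card_univ, ZMod.card, smul_eq_mul, hm]; ring
  obtain ⟨t, ht, hT⟩ := exists_le_sum_eq univ (fun i => K - (w i + w (i + 1)))
    (T := K * m - W) (by omega)
  have hdvd : K ∣ ∑ i, (w i + t i) := ⟨m, by rw [sum_add_distrib, hT]; omega⟩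
  refine ⟨fun i => ZMod.arc (cyclicPosition K (fun i => w i + t i) i) (w i),
    fun i => ?_, fun i => ?_⟩
  · dsimp only
    rw [cyclicPosition_add_one hdvd]
    exact ZMod.disjoint_arc _ (by have := ht i; have := hadj i; omega)
  · exact ZMod.card_arc _ (by have := hadj i; omega)

theorem exists_isWeightedColoring_iff (hodd : Odd ℓ) (w : ZMod ℓ → ℕ) (k : ℕ) :
    (∃ S : Fin k → Finset (ZMod ℓ), IsWeightedColoring w S) ↔
      (∀ i, w i + w (i + 1) ≤ k) ∧ 2 * ∑ i, w i ≤ (ℓ - 1) * k := by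
  refine ⟨fun ⟨S, hS⟩ => ⟨hS.add_le, hS.two_mul_sum_le hodd⟩, fun ⟨hadj, hsum⟩ => ?_⟩
  rcases k.eq_zero_or_pos with rfl | hk
  · exact ⟨Fin.elim0, fun j => j.elim0, fun i => by have := hadj i; omega⟩
  · have : NeZero k := ⟨hk.ne'⟩
    obtain ⟨A, hdisj, hcard⟩ := exists_disjoint_succ_of_two_mul_sum_le hodd hadj hsum
    exact exists_isWeightedColoring_of_disjoint_succ (ZMod.card k) A hdisj
      fun i => (hcard i).ge

theorem stmt19_general (ℓ : ℕ) [NeZero ℓ] (hℓ : 5 ≤ ℓ) (hodd : Odd ℓ)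
    (w : ZMod ℓ → ℕ) :
    sInf {k : ℕ | ∃ S : Fin k → Finset (ZMod ℓ),
        (∀ j : Fin k, ∀ a ∈ S j, ∀ b ∈ S j, ¬ (a = b + 1 ∨ b = a + 1)) ∧
        (∀ i : ZMod ℓ, w i ≤ (Finset.univ.filter (fun j => i ∈ S j)).card)} =
      max (Finset.univ.sup (fun i : ZMod ℓ => w i + w (i + 1)))
        ((2 * ∑ i : ZMod ℓ, w i + ℓ - 2) / (ℓ - 1)) := by
  have hceil : (2 * ∑ i, w i + ℓ - 2) / (ℓ - 1) = (2 * ∑ i, w i) ⌈/⌉ (ℓ - 1) := by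
    rw [Nat.ceilDiv_eq_add_pred_div]; congr 1; omega
  suffices hset : {k | ∃ S : Fin k → Finset (ZMod ℓ), IsWeightedColoring w S} =
      Set.Ici (max (univ.sup fun i => w i + w (i + 1)) ((2 * ∑ i, w i) ⌈/⌉ (ℓ - 1))) by
    rw [hceil, ← csInf_Ici (a := max _ _), ← hset]
    rfl
  ext k
  rw [Set.mem_Ici, max_le_iff, Finset.sup_le_iff, ceilDiv_le_iff_le_mul (by omega)]
  simpa using exists_isWeightedColoring_iff hodd w k

/-- The weighted chromatic number of an odd cycle of length `ℓ ≥ 5` with positive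
weights `w` equals `max(max_i (w i + w (i+1)), ⌈2·(∑ w)/(ℓ-1)⌉)` (ceiling via natural
division). -/
theorem stmt19 (ℓ : ℕ) [NeZero ℓ] (hℓ : 5 ≤ ℓ) (hodd : Odd ℓ)
    (w : ZMod ℓ → ℕ) (hw : ∀ i, 1 ≤ w i) :
    sInf {k : ℕ | ∃ S : Fin k → Finset (ZMod ℓ),
        (∀ j : Fin k, ∀ a ∈ S j, ∀ b ∈ S j, ¬ (a = b + 1 ∨ b = a + 1)) ∧
        (∀ i : ZMod ℓ, w i ≤ (Finset.univ.filter (fun j => i ∈ S j)).card)} =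
      max (Finset.univ.sup (fun i : ZMod ℓ => w i + w (i + 1)))
        ((2 * ∑ i : ZMod ℓ, w i + ℓ - 2) / (ℓ - 1)) :=
  stmt19_general ℓ hℓ hodd w
end
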